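/- arXiv:1805.11645 — 5 statements merged into one kernel-verified Lean document; each statement's English description precedes it below -/
import Mathlib

section
/- Suppose in addition that ρ_i and β_i are continuous on [0, b̄_i] for every i ∈ I and that p is finite on all of ℝ^K. Then for every λ ∈ ℝ^K, the subdifferential of the dual function Q at λ equals the convex hull of the set { y − Σ_{i ∈ I} v_i(x_i, b_i) : (x_i, b_i) ∈ S_i*(λ) for each i ∈ I, and y is a subgradient of p at λ }. -/
/-
Each `ψ_i` is a pointwise maximum of functions of `λ` that are affine with slope `-v_i(x_i, b_i)`.
Continuity of `ρ_i` and `β_i` makes the objective continuous on the compact part of `S_i` that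
carries all its values, so the maximum is attained there and Danskin's theorem gives
`∂ψ_i(λ) = conv {-v_i(x_i, b_i) : (x_i, b_i) ∈ S_i*(λ)}`. The `ψ_i` and `p` are finite convex
functions on `ℝ^K`, hence continuous, so the Moreau–Rockafellar sum rule gives
`∂Q(λ) = Σ_i ∂ψ_i(λ) + ∂p(λ)`. Since `∂p(λ)` is convex and convex hulls commute with Minkowski
sums, this is the convex hull of the set in the statement.
-/

open Set
open scoped Pointwise

/-- Separate the open strict epigraph of `f` from the hypograph of `g`; the separating hyperplane
is not vertical, so it is the graph of an affine function. -/
theorem exists_affine_between_of_concaveOn_of_convexOn {E : Type*} [TopologicalSpace E]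
    [AddCommGroup E] [Module ℝ E] [IsTopologicalAddGroup E] [ContinuousSMul ℝ E] {f g : E → ℝ}
    (hg : ConcaveOn ℝ univ g) (hf : ConvexOn ℝ univ f) (hfc : Continuous f)
    (hgf : ∀ y, g y ≤ f y) :
    ∃ (L : StrongDual ℝ E) (c : ℝ), ∀ y, g y ≤ L y + c ∧ L y + c ≤ f y := by
  have hopen : IsOpen {q : E × ℝ | q.1 ∈ univ ∧ f q.1 < q.2} := by
    simpa only [mem_univ, true_and] using
      isOpen_lt (f := fun q : E × ℝ => f q.1) (by fun_prop) continuous_snd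
  have hdisj : Disjoint {q : E × ℝ | q.1 ∈ univ ∧ f q.1 < q.2} {q | q.1 ∈ univ ∧ q.2 ≤ g q.1} :=
    disjoint_left.2 fun q hA hB => (hA.2.trans_le (hB.2.trans (hgf q.1))).false
  obtain ⟨F, u, hA, hB⟩ :=
    geometric_hahn_banach_open hf.convex_strict_epigraph hopen hg.convex_hypograph hdisj
  set α := F (0, 1)
  set L₀ := F.comp (ContinuousLinearMap.inl ℝ E ℝ)
  have hF : ∀ y t, F (y, t) = L₀ y + t * α := fun y t => by
    rw [show (y, t) = (y, (0 : ℝ)) + t • ((0 : E), (1 : ℝ)) by simp, map_add, map_smul,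
      smul_eq_mul]
    rfl
  have hα : α < 0 := by
    have h₁ := hA (0, f 0 + 1) ⟨mem_univ _, lt_add_one _⟩
    have h₂ := hB (0, g 0) ⟨mem_univ _, le_rfl⟩
    rw [hF] at h₁ h₂
    nlinarith [hgf 0]
  refine ⟨-α⁻¹ • L₀, u / α, fun y => ?_⟩
  have hy : (-α⁻¹ • L₀) y + u / α = (u - L₀ y) / α := by
    simp only [FunLike.coe_smul, Pi.smul_apply, smul_eq_mul]
    field_simp
    ring
  rw [hy]
  constructor
  · have := hB (y, g y) ⟨mem_univ _, le_rfl⟩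
    rw [hF] at this
    rw [le_div_iff_of_neg hα]
    linarith
  · refine le_of_forall_gt_imp_ge_of_dense fun t ht => ?_
    have := hA (y, t) ⟨mem_univ _, ht⟩
    rw [hF] at this
    rw [div_le_iff_of_neg hα]
    linarith

theorem StrongDual.exists_dotProduct_eq {K : Type*} [Fintype K] (L : StrongDual ℝ (K → ℝ)) :
    ∃ e : K → ℝ, ∀ v, L v = e ⬝ᵥ v := by
  classical
  exact ⟨(dotProductEquiv ℝ K).symm L.toLinearMap, fun v =>
    (LinearMap.congr_fun ((dotProductEquiv ℝ K).apply_symm_apply L.toLinearMap) v).symm⟩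

/-- Carathéodory's theorem bounds the number of points in a convex combination, so the convex hull
is a finite union of continuous images of compact sets. -/
theorem IsCompact.convexHull_of_finiteDimensional {E : Type*} [AddCommGroup E] [Module ℝ E]
    [TopologicalSpace E] [IsTopologicalAddGroup E] [ContinuousSMul ℝ E] [FiniteDimensional ℝ E]
    {s : Set E} (hs : IsCompact s) : IsCompact (convexHull ℝ s) := by
  let comb (m : ℕ) (q : (Fin m → ℝ) × (Fin m → E)) : E := ∑ j, q.1 j • q.2 j
  have hhull : convexHull ℝ s = ⋃ m ∈ Finset.range (Module.finrank ℝ E + 2),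
      comb m '' (stdSimplex ℝ (Fin m) ×ˢ univ.pi fun _ => s) := by
    refine Subset.antisymm (fun x hx => ?_) (iUnion₂_subset fun m _ => ?_)
    · obtain ⟨ι, _, z, w, hzs, hz, hw₀, hw₁, rfl⟩ := eq_pos_convex_span_of_mem_convexHull hx
      have hcard : Fintype.card ι < Module.finrank ℝ E + 2 :=
        Nat.lt_succ_of_le (hz.card_le_finrank_succ.trans
          (Nat.succ_le_succ (Submodule.finrank_le _)))
      let e := (Fintype.equivFin ι).symm
      refine mem_biUnion (Finset.mem_range.2 hcard)
        ⟨(w ∘ e, z ∘ e), ⟨⟨fun j => (hw₀ _).le, ?_⟩, fun j _ => hzs ⟨_, rfl⟩⟩, ?_⟩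
      · simpa only [Function.comp_apply, e.sum_comp] using hw₁
      · exact e.sum_comp fun i => w i • z i
    · rintro _ ⟨q, ⟨hq, hqs⟩, rfl⟩
      exact (convex_convexHull ℝ s).sum_mem (fun j _ => hq.1 j) hq.2
        fun j _ => subset_convexHull ℝ s (hqs j trivial)
  rw [hhull]
  exact (Finset.range _).isCompact_biUnion fun m _ =>
    ((isCompact_stdSimplex _ _).prod (isCompact_univ_pi fun _ => hs)).image (by fun_prop)

theorem mem_convexHull_of_forall_exists_dotProduct_le {K : Type*} [Fintype K] {W : Set (K → ℝ)}
    (hW : IsCompact W) {g : K → ℝ} (hg : ∀ d, ∃ w ∈ W, g ⬝ᵥ d ≤ w ⬝ᵥ d) : g ∈ convexHull ℝ W := by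
  by_contra hgW
  obtain ⟨L, u, hL, hu⟩ := geometric_hahn_banach_closed_point (convex_convexHull ℝ W)
    hW.convexHull_of_finiteDimensional.isClosed hgW
  obtain ⟨e, he⟩ := L.exists_dotProduct_eq
  obtain ⟨w, hw, hgw⟩ := hg e
  have := hL w (subset_convexHull ℝ W hw)
  rw [he, dotProduct_comm] at this
  rw [he, dotProduct_comm] at hu
  linarith

theorem convexOn_finsetSum {E ι : Type*} [AddCommMonoid E] [Module ℝ E] {s : Set E}
    (hs : Convex ℝ s) (t : Finset ι) {f : ι → E → ℝ} (hf : ∀ i ∈ t, ConvexOn ℝ s (f i)) :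
    ConvexOn ℝ s (∑ i ∈ t, f i) :=
  Finset.sum_induction _ _ (fun _ _ => ConvexOn.add) (convexOn_const 0 hs) hf

section Subdifferential

variable {K : Type*} [Fintype K]

def subdifferential (f : (K → ℝ) → ℝ) (x : K → ℝ) : Set (K → ℝ) :=
  {g | ∀ y, f x + g ⬝ᵥ (y - x) ≤ f y}

theorem convex_subdifferential (f : (K → ℝ) → ℝ) (x : K → ℝ) :
    Convex ℝ (subdifferential f x) := by
  intro g₁ hg₁ g₂ hg₂ θ σ hθ hσ hθσ y
  have h₁ := mul_le_mul_of_nonneg_left (hg₁ y) hθ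
  have h₂ := mul_le_mul_of_nonneg_left (hg₂ y) hσ
  rw [add_dotProduct, smul_dotProduct, smul_dotProduct, smul_eq_mul, smul_eq_mul]
  linear_combination h₁ + h₂ + (f y - f x) * hθσ

theorem subdifferential_zero (x : K → ℝ) : subdifferential 0 x = 0 := by
  ext g
  refine ⟨fun hg => ?_, fun hg y => ?_⟩
  · have := hg (x + g)
    simp only [Pi.zero_apply, zero_add, add_sub_cancel_left] at this
    exact dotProduct_self_eq_zero.1 (le_antisymm this (dotProduct_self_star_nonneg g))
  · simp [Set.mem_zero.1 hg]

theorem add_subset_subdifferential_add (f₁ f₂ : (K → ℝ) → ℝ) (x : K → ℝ) :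
    subdifferential f₁ x + subdifferential f₂ x ⊆ subdifferential (f₁ + f₂) x := by
  rintro _ ⟨g₁, hg₁, g₂, hg₂, rfl⟩ y
  rw [Pi.add_apply, Pi.add_apply, add_dotProduct]
  linarith [hg₁ y, hg₂ y]

/-- Moreau–Rockafellar: the sandwich theorem puts an affine function between the convex
`f₁ - g ⬝ᵥ ·` and the concave `f₁ x + f₂ x - g ⬝ᵥ x - f₂`; finite convex functions on `K → ℝ` are
continuous. -/
theorem subdifferential_add {f₁ f₂ : (K → ℝ) → ℝ} (h₁ : ConvexOn ℝ univ f₁)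
    (h₂ : ConvexOn ℝ univ f₂) (x : K → ℝ) :
    subdifferential (f₁ + f₂) x = subdifferential f₁ x + subdifferential f₂ x := by
  classical
  refine (Subset.antisymm ?_ (add_subset_subdifferential_add f₁ f₂ x))
  intro g hg
  obtain ⟨L, c, hLc⟩ := exists_affine_between_of_concaveOn_of_convexOn
    (h₂.neg.add_const (f₁ x + f₂ x - g ⬝ᵥ x))
    (h₁.sub ((dotProductEquiv ℝ K g).concaveOn convex_univ))
    ((continuousOn_univ.1 (h₁.continuousOn isOpen_univ)).sub (by fun_prop))
    (fun y => by
      have := hg y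
      simp only [Pi.add_apply, Pi.neg_apply, Pi.sub_apply, dotProductEquiv_apply_apply,
        dotProduct_sub] at this ⊢
      linarith)
  simp only [Pi.add_apply, Pi.neg_apply, Pi.sub_apply, dotProductEquiv_apply_apply] at hLc
  obtain ⟨e, he⟩ := L.exists_dotProduct_eq
  have hc : c = f₁ x - g ⬝ᵥ x - e ⬝ᵥ x := by
    have := hLc x
    rw [he] at this
    linarith [this.1, this.2]
  refine ⟨g + e, fun y => ?_, -e, fun y => ?_, add_neg_cancel_right g e⟩
  · have := (hLc y).2
    rw [he, hc] at this
    rw [add_dotProduct, dotProduct_sub, dotProduct_sub]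
    linarith
  · have := (hLc y).1
    rw [he, hc] at this
    rw [neg_dotProduct, dotProduct_sub]
    linarith

theorem subdifferential_sum {ι : Type*} (s : Finset ι) {f : ι → (K → ℝ) → ℝ}
    (hf : ∀ i ∈ s, ConvexOn ℝ univ (f i)) (x : K → ℝ) :
    subdifferential (∑ i ∈ s, f i) x = ∑ i ∈ s, subdifferential (f i) x := by
  classical
  induction s using Finset.induction_on with
  | empty => exact subdifferential_zero x
  | insert a s ha ih =>
    have hs : ∀ i ∈ s, ConvexOn ℝ univ (f i) := fun i hi => hf i (Finset.mem_insert_of_mem hi)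
    rw [Finset.sum_insert ha, Finset.sum_insert ha, subdifferential_add
      (hf a (Finset.mem_insert_self a s)) (convexOn_finsetSum convex_univ s hs), ih hs]

end Subdifferential

section SupOfAffine

variable {K C : Type*} [Fintype K] {S T : Set C} {F : (K → ℝ) → C → ℝ}
  {a : C → ℝ} {w : C → K → ℝ} {f : (K → ℝ) → ℝ}

theorem convexOn_of_isLUB_affine (hF : ∀ μ c, F μ c = a c + w c ⬝ᵥ μ)
    (hf : ∀ μ, IsLUB (F μ '' S) (f μ)) : ConvexOn ℝ univ f := by
  refine ⟨convex_univ, fun μ₁ _ μ₂ _ θ σ hθ hσ hθσ => (hf _).2 ?_⟩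
  rintro _ ⟨c, hc, rfl⟩
  have h₁ := mul_le_mul_of_nonneg_left ((hf μ₁).1 ⟨c, hc, rfl⟩) hθ
  have h₂ := mul_le_mul_of_nonneg_left ((hf μ₂).1 ⟨c, hc, rfl⟩) hσ
  rw [hF] at h₁ h₂ ⊢
  simp only [dotProduct_add, dotProduct_smul, smul_eq_mul]
  linear_combination h₁ + h₂ - a c * hθσ

variable [TopologicalSpace C]

/-- Moving from `x` in the direction `d`, the maximisers stay in the compact set of pieces with
slope at least `g ⬝ᵥ d`; as the step shrinks, their values at `x` tend to `f x`. -/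
theorem exists_active_le_dotProduct (hTS : T ⊆ S) (hT : IsCompact T) (ha : ContinuousOn a T)
    (hw : ContinuousOn w T) (hF : ∀ μ c, F μ c = a c + w c ⬝ᵥ μ)
    (hf : ∀ μ, IsGreatest (F μ '' S) (f μ)) (hfT : ∀ μ, ∃ c ∈ T, F μ c = f μ) {x g : K → ℝ}
    (hg : g ∈ subdifferential f x) (d : K → ℝ) :
    ∃ c ∈ T, f x ≤ F x c ∧ g ⬝ᵥ d ≤ w c ⬝ᵥ d := by
  have hwd : ContinuousOn (fun c => w c ⬝ᵥ d) T :=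
    (continuous_id.dotProduct continuous_const).comp_continuousOn hw
  have hFx : ContinuousOn (F x) T := by
    simp only [funext (hF x)]
    fun_prop
  obtain ⟨B, hB⟩ := hT.bddAbove_image hwd
  have hstep : ∀ t > 0, ∃ c ∈ T, g ⬝ᵥ d ≤ w c ⬝ᵥ d ∧ f x - t * (B - g ⬝ᵥ d) ≤ F x c := by
    intro t ht
    obtain ⟨c, hcT, hc⟩ := hfT (x + t • d)
    have hsub := hg (x + t • d)
    have hle := (hf x).2 ⟨c, hTS hcT, rfl⟩
    have hBc := hB ⟨c, hcT, rfl⟩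
    rw [hF, dotProduct_add, dotProduct_smul, smul_eq_mul, ← add_assoc, ← hF] at hc
    rw [add_sub_cancel_left, dotProduct_smul, smul_eq_mul] at hsub
    refine ⟨c, hcT, le_of_mul_le_mul_left (by linarith) ht, by nlinarith⟩
  set Z := T ∩ (fun c => w c ⬝ᵥ d) ⁻¹' Ici (g ⬝ᵥ d)
  have hZ : IsCompact Z := hwd.upperSemicontinuousOn.isCompact_inter_preimage_Ici hT _
  obtain ⟨c₁, hc₁T, hc₁, -⟩ := hstep 1 one_pos
  obtain ⟨c, ⟨hcT, hcd⟩, hcmax⟩ :=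
    hZ.exists_isMaxOn ⟨c₁, hc₁T, hc₁⟩ (hFx.mono inter_subset_left)
  refine ⟨c, hcT, le_of_forall_pos_le_add fun ε hε => ?_, hcd⟩
  have hBg : 0 ≤ B - g ⬝ᵥ d := by linarith [hB ⟨c₁, hc₁T, rfl⟩]
  obtain ⟨c', hc'T, hc'd, hc'⟩ := hstep (ε / (B - g ⬝ᵥ d + 1)) (by positivity)
  have : ε / (B - g ⬝ᵥ d + 1) * (B - g ⬝ᵥ d) ≤ ε := by
    rw [div_mul_eq_mul_div, div_le_iff₀ (by positivity)]
    nlinarith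
  linarith [isMaxOn_iff.1 hcmax c' ⟨hc'T, hc'd⟩]

/-- Danskin's theorem. -/
theorem subdifferential_eq_convexHull (hTS : T ⊆ S) (hT : IsCompact T) (ha : ContinuousOn a T)
    (hw : ContinuousOn w T) (hF : ∀ μ c, F μ c = a c + w c ⬝ᵥ μ)
    (hf : ∀ μ, IsGreatest (F μ '' S) (f μ)) (hfT : ∀ μ, ∃ c ∈ T, F μ c = f μ) (x : K → ℝ) :
    subdifferential f x = convexHull ℝ (w '' {c ∈ S | F x c = f x}) := by
  refine Subset.antisymm (fun g hg => ?_) (convexHull_min ?_ (convex_subdifferential f x))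
  · have hFx : ContinuousOn (F x) T := by
      simp only [funext (hF x)]
      fun_prop
    set A := T ∩ F x ⁻¹' Ici (f x)
    have hA : IsCompact A := hFx.upperSemicontinuousOn.isCompact_inter_preimage_Ici hT _
    have hAS : A ⊆ {c ∈ S | F x c = f x} := fun c hc =>
      ⟨hTS hc.1, le_antisymm ((hf x).2 ⟨c, hTS hc.1, rfl⟩) hc.2⟩
    refine convexHull_mono (image_mono hAS) <|
      mem_convexHull_of_forall_exists_dotProduct_le (hA.image_of_continuousOn (hw.mono
        inter_subset_left)) fun d => ?_
    obtain ⟨c, hcT, hc, hcd⟩ := exists_active_le_dotProduct hTS hT ha hw hF hf hfT hg d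
    exact ⟨w c, ⟨c, ⟨hcT, hc⟩, rfl⟩, hcd⟩
  · rintro _ ⟨c, ⟨hcS, hc⟩, rfl⟩ y
    have := (hf y).2 ⟨c, hcS, rfl⟩
    rw [hF] at this hc
    rw [← hc, dotProduct_sub]
    linarith

end SupOfAffine

theorem IsGreatest.apply_eq_iff {α β : Type*} [PartialOrder β] {f : α → β} {S : Set α} {m : β}
    (h : IsGreatest (f '' S) m) {c : α} (hc : c ∈ S) : f c = m ↔ ∀ y ∈ S, f y ≤ f c := by
  refine ⟨fun hcm y hy => hcm ▸ h.2 ⟨y, hy, rfl⟩, fun hmax => le_antisymm (h.2 ⟨c, hc, rfl⟩) ?_⟩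
  obtain ⟨y, hy, rfl⟩ := h.1
  exact hmax y hy

namespace EReal

theorem coe_finset_sum {ι : Type*} (s : Finset ι) (f : ι → ℝ) :
    ((∑ i ∈ s, f i : ℝ) : EReal) = ∑ i ∈ s, (f i : EReal) :=
  map_sum (⟨⟨(↑), coe_zero⟩, coe_add⟩ : ℝ →+ EReal) f s

theorem isLUB_range_of_iSup_coe_eq {ι : Sort*} {f : ι → ℝ} {m : ℝ}
    (h : ⨆ i, (f i : EReal) = m) : IsLUB (range f) m :=
  ⟨by rintro _ ⟨i, rfl⟩; exact EReal.coe_le_coe_iff.1 (h ▸ le_iSup (fun i => (f i : EReal)) i),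
    fun b hb => EReal.coe_le_coe_iff.1 (h ▸ iSup_le fun i => EReal.coe_le_coe_iff.2 (hb ⟨i, rfl⟩))⟩

theorem biSup_coe_eq_of_isGreatest {α : Type*} {f : α → ℝ} {S : Set α} {m : ℝ}
    (h : IsGreatest (f '' S) m) : ⨆ x ∈ S, (f x : EReal) = m := by
  refine le_antisymm (iSup₂_le fun x hx => EReal.coe_le_coe_iff.2 (h.2 ⟨x, hx, rfl⟩)) ?_
  obtain ⟨x, hx, rfl⟩ := h.1
  exact le_iSup₂_of_le (f := fun x (_ : x ∈ S) => (f x : EReal)) x hx le_rfl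

theorem add_sum_le_iff_mem_subdifferential {K : Type*} [Fintype K] {f : (K → ℝ) → ℝ}
    {x g : K → ℝ} :
    (∀ y, (f x : EReal) + ((∑ k, g k * (y k - x k) : ℝ) : EReal) ≤ f y) ↔
      g ∈ subdifferential f x := by
  simp only [← coe_add, EReal.coe_le_coe_iff]
  exact Iff.rfl

end EReal

theorem exists_convexOn_coe_eq_of_eq_iSup {K : Type*} [Fintype K] {u : (K → ℝ) → ℝ}
    {p : (K → ℝ) → EReal} (hp : ∀ μ, p μ = ⨆ w, ((∑ k, μ k * w k + u w : ℝ) : EReal))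
    (hpfin : ∀ μ, p μ ≠ ⊤) : ∃ P : (K → ℝ) → ℝ, ConvexOn ℝ univ P ∧ ∀ μ, p μ = P μ := by
  have hpP : ∀ μ, p μ = (p μ).toReal := fun μ => (EReal.coe_toReal (hpfin μ)
    (ne_bot_of_le_ne_bot (EReal.coe_ne_bot _) ((hp μ).symm ▸ le_iSup _ 0))).symm
  have hF : ∀ μ c, ∑ k, μ k * c k + u c = u c + id c ⬝ᵥ μ := fun μ c => by
    rw [add_comm, id, dotProduct_comm]
    rfl
  refine ⟨fun μ => (p μ).toReal, convexOn_of_isLUB_affine (S := univ) hF fun μ => ?_, hpP⟩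
  rw [image_univ]
  exact EReal.isLUB_range_of_iSup_coe_eq ((hp μ).symm.trans (hpP μ))

theorem setOf_exists_sub_sum_eq_sum_image_add {K ι α : Type*} [Fintype ι] (Y : Set (K → ℝ))
    (A : ι → Set α) (v : ι → α → K → ℝ) :
    {g | ∃ y ∈ Y, ∃ a : ι → α, (∀ i, a i ∈ A i) ∧ g = fun k => y k - ∑ i, v i (a i) k} =
      ∑ i, (fun c => -v i c) '' A i + Y := by
  ext g
  simp only [mem_ofPred_eq, mem_add, mem_fintype_sum, mem_image]
  constructor
  · rintro ⟨y, hy, a, ha, rfl⟩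
    refine ⟨_, ⟨fun i => -v i (a i), fun i => ⟨a i, ha i, rfl⟩, rfl⟩, y, hy, ?_⟩
    ext k
    simp only [Pi.add_apply, Finset.sum_apply, Pi.neg_apply, Finset.sum_neg_distrib]
    ring
  · rintro ⟨_, ⟨G, hG, rfl⟩, y, hy, rfl⟩
    choose a ha hG using hG
    refine ⟨y, hy, a, ha, ?_⟩
    ext k
    simp only [← hG, Pi.add_apply, Finset.sum_apply, Pi.neg_apply, Finset.sum_neg_distrib]
    ring

section Allocation

/- `feasibleSet`, `objective`, `usage`, `optimalValue` and `optimalSet` are `S_i`, the function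
maximised in `ψ_i`, `v_i`, `ψ_i` and `S_i*`. -/

variable {I K : Type*} [Fintype K] [DecidableEq I] [DecidableEq K] (E : Finset (I × K))
  (bbar : I → ℝ) (ρ β : I → ℝ → ℝ) (s : I → ℝ) (r : I → K → ℝ) (i : I)

def feasibleSet : Set ((K → ℝ) × (K → ℝ)) :=
  {xb | (∀ k, (i, k) ∈ E → 0 ≤ xb.1 k) ∧
    (∑ k ∈ Finset.univ.filter (fun k => (i, k) ∈ E), xb.1 k) ≤ 1 ∧
    (∀ k, (i, k) ∈ E → xb.2 k ∈ Icc (0 : ℝ) (bbar i))}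

def objective (μ : K → ℝ) (xb : (K → ℝ) × (K → ℝ)) : ℝ :=
  ∑ k ∈ Finset.univ.filter (fun k => (i, k) ∈ E),
    (r i k * (1 - μ k) - β i (xb.2 k)) * ρ i (xb.2 k) * s i * xb.1 k

def usage (xb : (K → ℝ) × (K → ℝ)) : K → ℝ :=
  fun k => if (i, k) ∈ E then r i k * s i * xb.1 k * ρ i (xb.2 k) else 0

/-- `feasibleSet` is unbounded in the coordinates `k ∉ K_i`, which the objective ignores; this
compact part of it already carries every value of the objective. -/
def feasibleCore : Set ((K → ℝ) × (K → ℝ)) :=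
  feasibleSet E bbar i ∩ ((univ.pi fun _ => Icc 0 1) ×ˢ univ.pi fun _ => Icc 0 (bbar i))

def restrictToEdges (xb : (K → ℝ) × (K → ℝ)) : (K → ℝ) × (K → ℝ) :=
  (fun k => if (i, k) ∈ E then xb.1 k else 0, fun k => if (i, k) ∈ E then xb.2 k else 0)

theorem objective_eq (μ : K → ℝ) (xb : (K → ℝ) × (K → ℝ)) :
    objective E ρ β s r i μ xb = objective E ρ β s r i 0 xb + (-usage E ρ s r i xb) ⬝ᵥ μ := by
  simp only [objective, usage, dotProduct, Pi.neg_apply, apply_ite, neg_zero, ite_mul, zero_mul,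
    ← Finset.sum_filter, ← Finset.sum_add_distrib, Pi.zero_apply]
  exact Finset.sum_congr rfl fun k _ => by ring

theorem objective_restrictToEdges (μ : K → ℝ) (xb : (K → ℝ) × (K → ℝ)) :
    objective E ρ β s r i μ (restrictToEdges E i xb) = objective E ρ β s r i μ xb :=
  Finset.sum_congr rfl fun k hk => by
    simp only [restrictToEdges, if_pos (Finset.mem_filter.1 hk).2]

theorem isClosed_feasibleSet : IsClosed (feasibleSet E bbar i) := by
  have hx (k : K) : Continuous fun xb : (K → ℝ) × (K → ℝ) => xb.1 k := by fun_prop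
  have hb (k : K) : Continuous fun xb : (K → ℝ) × (K → ℝ) => xb.2 k := by fun_prop
  simp only [feasibleSet, ofPred_and, ofPred_forall]
  exact (isClosed_iInter fun k => isClosed_iInter fun _ =>
    isClosed_le continuous_const (hx k)).inter
    ((isClosed_le (continuous_finsetSum _ fun k _ => hx k) continuous_const).inter
    (isClosed_iInter fun k => isClosed_iInter fun _ => isClosed_Icc.preimage (hb k)))

theorem isCompact_feasibleCore : IsCompact (feasibleCore E bbar i) :=
  ((isCompact_univ_pi fun _ => isCompact_Icc).prod
    (isCompact_univ_pi fun _ => isCompact_Icc)).inter_left (isClosed_feasibleSet E bbar i)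

theorem restrictToEdges_mem_feasibleCore (hbbar : 0 ≤ bbar i) {xb : (K → ℝ) × (K → ℝ)}
    (hxb : xb ∈ feasibleSet E bbar i) : restrictToEdges E i xb ∈ feasibleCore E bbar i := by
  obtain ⟨hx, hsum, hb⟩ := hxb
  have hx1 : ∀ k, (i, k) ∈ E → xb.1 k ≤ 1 := fun k hk =>
    (Finset.single_le_sum (fun j hj => hx j (Finset.mem_filter.1 hj).2)
      (Finset.mem_filter.2 ⟨Finset.mem_univ k, hk⟩)).trans hsum
  refine ⟨⟨fun k hk => ?_, ?_, fun k hk => ?_⟩, fun k _ => ?_, fun k _ => ?_⟩ <;>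
    simp only [restrictToEdges]
  · simpa [hk] using hx k hk
  · rwa [Finset.sum_congr rfl fun k hk => if_pos (Finset.mem_filter.1 hk).2]
  · simpa [hk] using hb k hk
  · split_ifs with hk
    · exact ⟨hx k hk, hx1 k hk⟩
    · exact ⟨le_rfl, zero_le_one⟩
  · split_ifs with hk
    · exact hb k hk
    · exact ⟨le_rfl, hbbar⟩

variable {bbar ρ i} in
theorem continuousOn_comp_snd_apply (hρ : ContinuousOn (ρ i) (Icc 0 (bbar i))) (k : K) :
    ContinuousOn (fun xb : (K → ℝ) × (K → ℝ) => ρ i (xb.2 k)) (feasibleCore E bbar i) :=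
  hρ.comp (by fun_prop : Continuous fun xb : (K → ℝ) × (K → ℝ) => xb.2 k).continuousOn
    fun _ hxb => hxb.2.2 k (mem_univ k)

variable {bbar ρ β i} in
theorem continuousOn_objective (hρ : ContinuousOn (ρ i) (Icc 0 (bbar i)))
    (hβ : ContinuousOn (β i) (Icc 0 (bbar i))) (μ : K → ℝ) :
    ContinuousOn (objective E ρ β s r i μ) (feasibleCore E bbar i) := by
  have hρk := continuousOn_comp_snd_apply E hρ
  have hβk := continuousOn_comp_snd_apply E hβ
  exact continuousOn_finsetSum _ fun k _ =>
    (((continuousOn_const.sub (hβk k)).mul (hρk k)).mul continuousOn_const).mul (by fun_prop)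

variable {bbar ρ i} in
theorem continuousOn_usage (hρ : ContinuousOn (ρ i) (Icc 0 (bbar i))) :
    ContinuousOn (usage E ρ s r i) (feasibleCore E bbar i) := by
  refine continuousOn_pi.2 fun k => ?_
  unfold usage
  split_ifs
  · exact (continuousOn_const.mul (by fun_prop)).mul (continuousOn_comp_snd_apply E hρ k)
  · exact continuousOn_const

variable {bbar ρ β i} in
theorem exists_isGreatest_objective (hbbar : 0 ≤ bbar i)
    (hρ : ContinuousOn (ρ i) (Icc 0 (bbar i))) (hβ : ContinuousOn (β i) (Icc 0 (bbar i)))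
    (μ : K → ℝ) : ∃ c ∈ feasibleCore E bbar i,
      IsGreatest (objective E ρ β s r i μ '' feasibleSet E bbar i) (objective E ρ β s r i μ c) := by
  have hne : (feasibleCore E bbar i).Nonempty :=
    ⟨_, restrictToEdges_mem_feasibleCore E bbar i hbbar (xb := 0)
      ⟨fun _ _ => le_rfl, by simp, fun _ _ => ⟨le_rfl, hbbar⟩⟩⟩
  obtain ⟨c, hc, hmax⟩ := (isCompact_feasibleCore E bbar i).exists_isMaxOn hne
    (continuousOn_objective E s r hρ hβ μ)
  refine ⟨c, hc, ⟨c, hc.1, rfl⟩, ?_⟩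
  rintro _ ⟨xb, hxb, rfl⟩
  rw [← objective_restrictToEdges]
  exact hmax (restrictToEdges_mem_feasibleCore E bbar i hbbar hxb)

noncomputable def optimalValue (μ : K → ℝ) : ℝ :=
  sSup (objective E ρ β s r i μ '' feasibleSet E bbar i)

def optimalSet (μ : K → ℝ) : Set ((K → ℝ) × (K → ℝ)) :=
  {xb | xb ∈ feasibleSet E bbar i ∧
    ∀ yb ∈ feasibleSet E bbar i, objective E ρ β s r i μ yb ≤ objective E ρ β s r i μ xb}

section OptimalValue

variable {bbar ρ β i} (hbbar : 0 ≤ bbar i) (hρ : ContinuousOn (ρ i) (Icc 0 (bbar i)))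
  (hβ : ContinuousOn (β i) (Icc 0 (bbar i)))
include hbbar hρ hβ

theorem isGreatest_optimalValue (μ : K → ℝ) :
    IsGreatest (objective E ρ β s r i μ '' feasibleSet E bbar i)
      (optimalValue E bbar ρ β s r i μ) := by
  obtain ⟨c, -, hc⟩ := exists_isGreatest_objective E s r hbbar hρ hβ μ
  rw [optimalValue, hc.csSup_eq]
  exact hc

theorem convexOn_optimalValue : ConvexOn ℝ univ (optimalValue E bbar ρ β s r i) :=
  convexOn_of_isLUB_affine (objective_eq E ρ β s r i) fun μ =>
    (isGreatest_optimalValue E s r hbbar hρ hβ μ).isLUB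

theorem subdifferential_optimalValue (μ : K → ℝ) :
    subdifferential (optimalValue E bbar ρ β s r i) μ =
      convexHull ℝ ((fun xb => -usage E ρ s r i xb) '' optimalSet E bbar ρ β s r i μ) := by
  rw [subdifferential_eq_convexHull inter_subset_left (isCompact_feasibleCore E bbar i)
    (continuousOn_objective E s r hρ hβ 0) (continuousOn_usage E s r hρ).neg
    (objective_eq E ρ β s r i) (isGreatest_optimalValue E s r hbbar hρ hβ) (fun ν => ?_) μ]
  · congr 2
    ext xb
    exact and_congr_right fun hxb =>
      (isGreatest_optimalValue E s r hbbar hρ hβ μ).apply_eq_iff hxb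
  · obtain ⟨c, hc, hmax⟩ := exists_isGreatest_objective E s r hbbar hρ hβ ν
    exact ⟨c, hc, hmax.csSup_eq.symm⟩

end OptimalValue

end Allocation

theorem stmt_4_general
    {I K : Type*} [Fintype I] [Fintype K] [DecidableEq I] [DecidableEq K]
    (E : Finset (I × K))
    (bbar : I → ℝ) (hbbar : ∀ i, 0 < bbar i)
    (ρ β : I → ℝ → ℝ)
    (s : I → ℝ)
    (r : I → K → ℝ)
    (h : I → ℝ → ℝ → ℝ)
    (hdef : ∀ i z b, h i z b = (z - β i b) * ρ i b)
    (hρcont : ∀ i, ContinuousOn (ρ i) (Set.Icc 0 (bbar i)))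
    (hβcont : ∀ i, ContinuousOn (β i) (Set.Icc 0 (bbar i)))
    (u : (K → ℝ) → ℝ)
    (p : (K → ℝ) → EReal)
    (hp : ∀ lam, p lam = ⨆ w : K → ℝ, (((∑ k, lam k * w k) + u w : ℝ) : EReal))
    (hpfin : ∀ lam, p lam ≠ ⊤)
    (Si : I → Set ((K → ℝ) × (K → ℝ)))
    (hSi : ∀ i, Si i = {xb | (∀ k, (i, k) ∈ E → 0 ≤ xb.1 k) ∧
      (∑ k ∈ Finset.univ.filter (fun k => (i, k) ∈ E), xb.1 k) ≤ 1 ∧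
      (∀ k, (i, k) ∈ E → xb.2 k ∈ Set.Icc (0:ℝ) (bbar i))})
    (obji : I → (K → ℝ) → (K → ℝ) → (K → ℝ) → ℝ)
    (hobji : ∀ i lam x b, obji i lam x b =
      ∑ k ∈ Finset.univ.filter (fun k => (i, k) ∈ E), h i (r i k * (1 - lam k)) (b k) * s i * x k)
    (Sistar : I → (K → ℝ) → Set ((K → ℝ) × (K → ℝ)))
    (hSistar : ∀ i lam, Sistar i lam =
      {xb | xb ∈ Si i ∧ ∀ yb ∈ Si i, obji i lam yb.1 yb.2 ≤ obji i lam xb.1 xb.2})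
    (vi : I → (K → ℝ) → (K → ℝ) → K → ℝ)
    (hvi : ∀ i x b k, vi i x b k = if (i, k) ∈ E then r i k * s i * x k * ρ i (b k) else 0)
    (psi : I → (K → ℝ) → EReal)
    (hpsi : ∀ i lam, psi i lam = ⨆ xb ∈ Si i, ((obji i lam xb.1 xb.2 : ℝ) : EReal))
    (Q : (K → ℝ) → EReal)
    (hQ : ∀ lam, Q lam = (∑ i, psi i lam) + p lam)
    (lam : K → ℝ) :
    {g : K → ℝ | ∀ mu, Q lam + (((∑ k, g k * (mu k - lam k)) : ℝ) : EReal) ≤ Q mu} =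
      convexHull ℝ {g : K → ℝ | ∃ y : K → ℝ,
        (∀ mu, p lam + (((∑ k, y k * (mu k - lam k)) : ℝ) : EReal) ≤ p mu) ∧
        ∃ xb : I → (K → ℝ) × (K → ℝ), (∀ i, xb i ∈ Sistar i lam) ∧
          g = fun k => y k - ∑ i, vi i (xb i).1 (xb i).2 k} := by
  have hS : ∀ i, Si i = feasibleSet E bbar i := hSi
  have hobj : ∀ i μ (xb : (K → ℝ) × (K → ℝ)), obji i μ xb.1 xb.2 = objective E ρ β s r i μ xb :=
    fun i μ xb => by simp only [hobji, hdef, objective]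
  have hv : ∀ i (xb : (K → ℝ) × (K → ℝ)) k, vi i xb.1 xb.2 k = usage E ρ s r i xb k :=
    fun i xb k => hvi i xb.1 xb.2 k
  have hψ : ∀ i μ, psi i μ = optimalValue E bbar ρ β s r i μ := fun i μ => by
    rw [hpsi, hS]
    simp only [hobj]
    exact EReal.biSup_coe_eq_of_isGreatest
      (isGreatest_optimalValue E s r (hbbar i).le (hρcont i) (hβcont i) μ)
  have hSstar : ∀ i, Sistar i lam = optimalSet E bbar ρ β s r i lam := fun i => by
    rw [hSistar, hS]
    simp only [hobj]
    rfl
  obtain ⟨P, hPconv, hpP⟩ := exists_convexOn_coe_eq_of_eq_iSup hp hpfin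
  have hΨconv : ∀ i ∈ Finset.univ, ConvexOn ℝ univ (optimalValue E bbar ρ β s r i) :=
    fun i _ => convexOn_optimalValue E s r (hbbar i).le (hρcont i) (hβcont i)
  have hQ' : ∀ μ, Q μ = ((∑ i, optimalValue E bbar ρ β s r i + P) μ : ℝ) := fun μ => by
    rw [hQ, hpP, Pi.add_apply, Finset.sum_apply, EReal.coe_add, EReal.coe_finset_sum]
    simp only [hψ]
  simp only [hQ', hpP, EReal.add_sum_le_iff_mem_subdifferential, ofPred_mem_eq, hv, hSstar]
  rw [setOf_exists_sub_sum_eq_sum_image_add, convexHull_add, convexHull_sum,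
    (convex_subdifferential P lam).convexHull_eq,
    subdifferential_add (convexOn_finsetSum convex_univ _ hΨconv) hPconv,
    subdifferential_sum _ hΨconv]
  simp only [subdifferential_optimalValue E s r (hbbar _).le (hρcont _) (hβcont _)]

theorem stmt_4
    {I K : Type*} [Fintype I] [Fintype K] [DecidableEq I] [DecidableEq K]
    (E : Finset (I × K))
    (bbar : I → ℝ) (hbbar : ∀ i, 0 < bbar i)
    (ρ β : I → ℝ → ℝ)
    (hρmono : ∀ i, MonotoneOn (ρ i) (Set.Icc 0 (bbar i)))
    (hβmono : ∀ i, MonotoneOn (β i) (Set.Icc 0 (bbar i)))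
    (hρ01 : ∀ i, ∀ b ∈ Set.Icc (0:ℝ) (bbar i), ρ i b ∈ Set.Icc (0:ℝ) 1)
    (hβb : ∀ i, ∀ b ∈ Set.Icc (0:ℝ) (bbar i), β i b ∈ Set.Icc (0:ℝ) b)
    (s : I → ℝ) (hs : ∀ i, 0 < s i)
    (r : I → K → ℝ) (hr : ∀ i k, (i, k) ∈ E → 0 < r i k)
    (h : I → ℝ → ℝ → ℝ)
    (hdef : ∀ i z b, h i z b = (z - β i b) * ρ i b)
    (hρcont : ∀ i, ContinuousOn (ρ i) (Set.Icc 0 (bbar i)))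
    (hβcont : ∀ i, ContinuousOn (β i) (Set.Icc 0 (bbar i)))
    (u : (K → ℝ) → ℝ) (hu : ConcaveOn ℝ Set.univ u)
    (p : (K → ℝ) → EReal)
    (hp : ∀ lam, p lam = ⨆ w : K → ℝ, (((∑ k, lam k * w k) + u w : ℝ) : EReal))
    (hpfin : ∀ lam, p lam ≠ ⊤)
    (Si : I → Set ((K → ℝ) × (K → ℝ)))
    (hSi : ∀ i, Si i = {xb | (∀ k, (i, k) ∈ E → 0 ≤ xb.1 k) ∧
      (∑ k ∈ Finset.univ.filter (fun k => (i, k) ∈ E), xb.1 k) ≤ 1 ∧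
      (∀ k, (i, k) ∈ E → xb.2 k ∈ Set.Icc (0:ℝ) (bbar i))})
    (obji : I → (K → ℝ) → (K → ℝ) → (K → ℝ) → ℝ)
    (hobji : ∀ i lam x b, obji i lam x b =
      ∑ k ∈ Finset.univ.filter (fun k => (i, k) ∈ E), h i (r i k * (1 - lam k)) (b k) * s i * x k)
    (Sistar : I → (K → ℝ) → Set ((K → ℝ) × (K → ℝ)))
    (hSistar : ∀ i lam, Sistar i lam =
      {xb | xb ∈ Si i ∧ ∀ yb ∈ Si i, obji i lam yb.1 yb.2 ≤ obji i lam xb.1 xb.2})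
    (vi : I → (K → ℝ) → (K → ℝ) → K → ℝ)
    (hvi : ∀ i x b k, vi i x b k = if (i, k) ∈ E then r i k * s i * x k * ρ i (b k) else 0)
    (psi : I → (K → ℝ) → EReal)
    (hpsi : ∀ i lam, psi i lam = ⨆ xb ∈ Si i, ((obji i lam xb.1 xb.2 : ℝ) : EReal))
    (Q : (K → ℝ) → EReal)
    (hQ : ∀ lam, Q lam = (∑ i, psi i lam) + p lam)
    (lam : K → ℝ) :
    {g : K → ℝ | ∀ mu, Q lam + (((∑ k, g k * (mu k - lam k)) : ℝ) : EReal) ≤ Q mu} =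
      convexHull ℝ {g : K → ℝ | ∃ y : K → ℝ,
        (∀ mu, p lam + (((∑ k, y k * (mu k - lam k)) : ℝ) : EReal) ≤ p mu) ∧
        ∃ xb : I → (K → ℝ) × (K → ℝ), (∀ i, xb i ∈ Sistar i lam) ∧
          g = fun k => y k - ∑ i, vi i (xb i).1 (xb i).2 k} :=
  stmt_4_general E bbar hbbar ρ β s r h hdef hρcont hβcont u p hp hpfin Si hSi obji hobji Sistar
    hSistar vi hvi psi hpsi Q hQ lam
end

section
/- Suppose p is finite on all of ℝ^K. Let λ* be a minimizer of the dual function Q over ℝ^K, let (x*, b*) ∈ S be a maximizer of (x,b) ↦ π(x,b) − (λ*)ᵀ v(x,b) over S, and suppose that v(x*, b*) is a subgradient of p at λ*. Then Q(λ*) = F(x*, b*). -/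
/-!
Write `v* = v(x*, b*)`. Since `v*` is a subgradient of `p` at `λ*`, the Fenchel–Young equality gives
`p(λ*) = λ*ᵀv* + u(v*)`: the inequality `≥` holds for every `w` in place of `v*`, and `≤` follows
by testing the subgradient inequality at the slopes `μ` of affine majorants of `u` that nearly
touch `u` at `v*` (Hahn–Banach; a finite concave function on `ℝ^K` is continuous). Optimality of
`(x*, b*)` makes the supremum in `Q(λ*)` equal to `π(x*, b*) − λ*ᵀv*`, and the two `λ*ᵀv*` cancel.
-/

open Set Matrix

section ConcaveConj

variable {K : Type*} [Fintype K]

/-- The conjugate `p` of the concave `u`, i.e. the convex conjugate of `-u`. -/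
noncomputable def concaveConj (u : (K → ℝ) → ℝ) (lam : K → ℝ) : EReal :=
  ⨆ w, ((lam ⬝ᵥ w + u w : ℝ) : EReal)

lemma le_concaveConj (u : (K → ℝ) → ℝ) (lam w : K → ℝ) :
    ((lam ⬝ᵥ w + u w : ℝ) : EReal) ≤ concaveConj u lam :=
  le_iSup (fun w => ((lam ⬝ᵥ w + u w : ℝ) : EReal)) w

lemma concaveConj_le {u : (K → ℝ) → ℝ} {lam : K → ℝ} {c : ℝ}
    (h : ∀ w, lam ⬝ᵥ w + u w ≤ c) : concaveConj u lam ≤ c :=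
  iSup_le fun w => EReal.coe_le_coe (h w)

lemma ContinuousLinearMap.exists_dotProduct_eq (l : (K → ℝ) →L[ℝ] ℝ) :
    ∃ μ : K → ℝ, ∀ w, μ ⬝ᵥ w = l w := by
  classical
  refine ⟨fun k => l (Pi.single k 1), fun w => ?_⟩
  conv_rhs => rw [pi_eq_sum_univ' w]
  simp [dotProduct, mul_comm]

/-- `μ` is the slope of an affine minorant of `-u` through `(w₀, -a)`, from Hahn–Banach. -/
lemma ConcaveOn.exists_concaveConj_le {u : (K → ℝ) → ℝ} (hu : ConcaveOn ℝ univ u) {w₀ : K → ℝ}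
    {a : ℝ} (ha : u w₀ < a) : ∃ μ : K → ℝ, concaveConj u μ ≤ ((μ ⬝ᵥ w₀ + a : ℝ) : EReal) := by
  have hcont : Continuous u := continuousOn_univ.1 (hu.continuousOn isOpen_univ)
  obtain ⟨l, c, hle, heq⟩ := hu.neg.exists_affine_le_of_lt (𝕜 := ℝ) (mem_univ w₀)
    (by simpa using ha : -a < (-u) w₀) isClosed_univ
    (hcont.neg.lowerSemicontinuous.lowerSemicontinuousOn _)
  obtain ⟨μ, hμ⟩ := l.exists_dotProduct_eq
  refine ⟨μ, concaveConj_le fun w => ?_⟩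
  have hw := hle ⟨w, mem_univ w⟩
  simp only [Function.const_apply, RCLike.re_to_real, Function.comp_apply, Pi.add_apply,
    Set.domRestrict_apply, Pi.neg_apply] at hw heq
  rw [hμ, hμ]
  linarith

lemma ConcaveOn.concaveConj_eq_of_subgradient {u : (K → ℝ) → ℝ} (hu : ConcaveOn ℝ univ u)
    {lam g : K → ℝ}
    (hg : ∀ μ, concaveConj u lam + ((g ⬝ᵥ (μ - lam) : ℝ) : EReal) ≤ concaveConj u μ) :
    concaveConj u lam = ((lam ⬝ᵥ g + u g : ℝ) : EReal) := by
  refine le_antisymm (EReal.le_of_forall_lt_iff_le.1 fun z hz => ?_) (le_concaveConj u lam g)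
  obtain ⟨μ, hμ⟩ := hu.exists_concaveConj_le (a := z - lam ⬝ᵥ g) (w₀ := g)
    (by linarith [EReal.coe_lt_coe_iff.1 hz])
  have h := (hg μ).trans hμ
  rw [← EReal.le_sub_iff_add_le (.inl (EReal.coe_ne_bot _)) (.inl (EReal.coe_ne_top _)),
    ← EReal.coe_sub] at h
  calc concaveConj u lam ≤ _ := h
    _ = z := by rw [dotProduct_sub, dotProduct_comm g, dotProduct_comm g]; ring_nf

end ConcaveConj

theorem stmt_5_general
    {I K : Type*} [Fintype K]
    (S : Set ((I → K → ℝ) × (I → K → ℝ)))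
    (prof : (I → K → ℝ) → (I → K → ℝ) → ℝ)
    (v : (I → K → ℝ) → (I → K → ℝ) → K → ℝ)
    (u : (K → ℝ) → ℝ) (hu : ConcaveOn ℝ Set.univ u)
    (p : (K → ℝ) → EReal)
    (hp : ∀ lam, p lam = ⨆ w : K → ℝ, (((∑ k, lam k * w k) + u w : ℝ) : EReal))
    (F : (I → K → ℝ) → (I → K → ℝ) → ℝ)
    (hF : ∀ x b, F x b = prof x b + u (v x b))
    (Q : (K → ℝ) → EReal)
    (hQ : ∀ lam, Q lam =
      (⨆ xb ∈ S, ((prof xb.1 xb.2 - ∑ k, lam k * v xb.1 xb.2 k : ℝ) : EReal)) + p lam)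
    (lamstar : K → ℝ)
    (xstar bstar : I → K → ℝ) (hmem : (xstar, bstar) ∈ S)
    (hopt : ∀ xb ∈ S, prof xb.1 xb.2 - ∑ k, lamstar k * v xb.1 xb.2 k ≤
      prof xstar bstar - ∑ k, lamstar k * v xstar bstar k)
    (hsub : ∀ mu, p lamstar +
      (((∑ k, v xstar bstar k * (mu k - lamstar k)) : ℝ) : EReal) ≤ p mu) :
    Q lamstar = ((F xstar bstar : ℝ) : EReal) := by
  have hp_star : p lamstar = ((lamstar ⬝ᵥ v xstar bstar + u (v xstar bstar) : ℝ) : EReal) := by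
    obtain rfl : p = concaveConj u := funext hp
    exact hu.concaveConj_eq_of_subgradient hsub
  have hsup : (⨆ xb ∈ S, ((prof xb.1 xb.2 - ∑ k, lamstar k * v xb.1 xb.2 k : ℝ) : EReal)) =
      ((prof xstar bstar - lamstar ⬝ᵥ v xstar bstar : ℝ) : EReal) :=
    le_antisymm (iSup₂_le fun xb hxb => EReal.coe_le_coe (hopt xb hxb))
      (le_iSup₂_of_le _ hmem le_rfl)
  rw [hQ, hsup, hp_star, hF, ← EReal.coe_add]
  ring_nf

theorem stmt_5
    {I K : Type*} [Fintype I] [Fintype K] [DecidableEq I] [DecidableEq K]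
    (E : Finset (I × K))
    (bbar : I → ℝ) (hbbar : ∀ i, 0 < bbar i)
    (ρ β : I → ℝ → ℝ)
    (hρmono : ∀ i, MonotoneOn (ρ i) (Set.Icc 0 (bbar i)))
    (hβmono : ∀ i, MonotoneOn (β i) (Set.Icc 0 (bbar i)))
    (hρ01 : ∀ i, ∀ b ∈ Set.Icc (0:ℝ) (bbar i), ρ i b ∈ Set.Icc (0:ℝ) 1)
    (hβb : ∀ i, ∀ b ∈ Set.Icc (0:ℝ) (bbar i), β i b ∈ Set.Icc (0:ℝ) b)
    (s : I → ℝ) (hs : ∀ i, 0 < s i)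
    (r : I → K → ℝ) (hr : ∀ i k, (i, k) ∈ E → 0 < r i k)
    (h : I → ℝ → ℝ → ℝ)
    (hdef : ∀ i z b, h i z b = (z - β i b) * ρ i b)
    (S : Set ((I → K → ℝ) × (I → K → ℝ)))
    (hS : S = {xb | (∀ i k, 0 ≤ xb.1 i k) ∧
      (∀ i, (∑ k ∈ Finset.univ.filter (fun k => (i, k) ∈ E), xb.1 i k) ≤ 1) ∧
      (∀ i k, (i, k) ∈ E → xb.2 i k ∈ Set.Icc (0:ℝ) (bbar i))})
    (prof : (I → K → ℝ) → (I → K → ℝ) → ℝ)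
    (hprof : ∀ x b, prof x b = ∑ e ∈ E, h e.1 (r e.1 e.2) (b e.1 e.2) * s e.1 * x e.1 e.2)
    (v : (I → K → ℝ) → (I → K → ℝ) → K → ℝ)
    (hv : ∀ x b k, v x b k =
      ∑ i ∈ Finset.univ.filter (fun i => (i, k) ∈ E), r i k * s i * x i k * ρ i (b i k))
    (u : (K → ℝ) → ℝ) (hu : ConcaveOn ℝ Set.univ u)
    (p : (K → ℝ) → EReal)
    (hp : ∀ lam, p lam = ⨆ w : K → ℝ, (((∑ k, lam k * w k) + u w : ℝ) : EReal))
    (F : (I → K → ℝ) → (I → K → ℝ) → ℝ)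
    (hF : ∀ x b, F x b = prof x b + u (v x b))
    (Q : (K → ℝ) → EReal)
    (hQ : ∀ lam, Q lam =
      (⨆ xb ∈ S, ((prof xb.1 xb.2 - ∑ k, lam k * v xb.1 xb.2 k : ℝ) : EReal)) + p lam)
    (hpfin : ∀ lam, p lam ≠ ⊤)
    (lamstar : K → ℝ) (hlam : ∀ lam, Q lamstar ≤ Q lam)
    (xstar bstar : I → K → ℝ) (hmem : (xstar, bstar) ∈ S)
    (hopt : ∀ xb ∈ S, prof xb.1 xb.2 - ∑ k, lamstar k * v xb.1 xb.2 k ≤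
      prof xstar bstar - ∑ k, lamstar k * v xstar bstar k)
    (hsub : ∀ mu, p lamstar +
      (((∑ k, v xstar bstar k * (mu k - lamstar k)) : ℝ) : EReal) ≤ p mu) :
    Q lamstar = ((F xstar bstar : ℝ) : EReal) :=
  stmt_5_general S prof v u hu p hp F hF Q hQ lamstar xstar bstar hmem hopt hsub
end

section
/- Suppose ρ_i and β_i are continuous on [0, b̄_i] and β_i(b)ρ_i(b) > 0 for all b ∈ (0, b̄_i], for every i ∈ I. Let λ ∈ ℝ^K satisfy the Unique Solution condition: for every (i,k) ∈ E with λ_k < 1, the maximizer of b ↦ h_i(r_{ik}(1 − λ_k), b) over [0, b̄_i] is unique. Then for every i ∈ I the set V_i := { v_i(x_i, b_i) : (x_i, b_i) ∈ S_i*(λ) } ⊆ ℝ^K is convex. -/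
/-!
At an optimum, a campaign `k` that is won with positive probability must be bid at a maximiser of
`b ↦ h(z_k, b)`, `z_k = r_k (1 - λ_k)`, and with nonnegative utility (else dropping `x_k` helps).
For `z_k > 0` the maximiser is unique; for `z_k ≤ 0`, nonnegative utility gives
`β(b) ρ(b) ≤ z_k ρ(b) ≤ 0`, so `b = 0`. Hence all optimal points bid a common `B_k` wherever they
win, and there both the objective and `v_i` are linear in the expected wins `q_k = x_k ρ(b_k)`.
Given two optimal points, bidding `B` with `x_k = (t q_k + u q'_k) / ρ(B_k)` realises the mixed
wins, is feasible because `q_k ≤ x_k ρ(B_k)`, and attains the mixed, hence optimal, objective.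
-/

open scoped BigOperators Classical

open Finset

theorem Finset.le_of_sum_le_sum_of_eq_of_ne {ι M : Type*} [AddCommMonoid M] [PartialOrder M]
    [IsOrderedCancelAddMonoid M] {s : Finset ι} {f g : ι → M} {i : ι} (hi : i ∈ s)
    (hfg : ∀ j ∈ s, j ≠ i → f j = g j) (h : ∑ j ∈ s, f j ≤ ∑ j ∈ s, g j) :
    f i ≤ g i := by
  rw [← add_sum_erase s f hi, ← add_sum_erase s g hi,
    sum_congr rfl fun j hj => hfg j (mem_of_mem_erase hj) (ne_of_mem_erase hj)] at h
  exact le_of_add_le_add_right h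

namespace Bidding

variable {K : Type*}

-- The paper's `h_i`.
def utility (ρ β : ℝ → ℝ) (z b : ℝ) : ℝ := (z - β b) * ρ b

def wins (ρ : ℝ → ℝ) (xb : (K → ℝ) × (K → ℝ)) (k : K) : ℝ := xb.1 k * ρ (xb.2 k)

-- The paper's `v_i`, with `c k = r_{ik} s_i`.
noncomputable def outcomeVec (c : K → ℝ) (F : Finset K) (ρ : ℝ → ℝ) (xb : (K → ℝ) × (K → ℝ))
    (k : K) : ℝ :=
  if k ∈ F then c k * wins ρ xb k else 0

structure IsFeasible (F : Finset K) (bbar : ℝ) (xb : (K → ℝ) × (K → ℝ)) : Prop where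
  alloc_nonneg : ∀ k ∈ F, 0 ≤ xb.1 k
  sum_alloc_le_one : ∑ k ∈ F, xb.1 k ≤ 1
  bid_mem : ∀ k ∈ F, xb.2 k ∈ Set.Icc 0 bbar

-- The objective defining `S_i*(λ)` divided by `s_i > 0`, with `z k = r_{ik} (1 - λ_k)`.
def payoff (F : Finset K) (ρ β : ℝ → ℝ) (z : K → ℝ) (xb : (K → ℝ) × (K → ℝ)) : ℝ :=
  ∑ k ∈ F, utility ρ β (z k) (xb.2 k) * xb.1 k

structure IsOptimal (F : Finset K) (bbar : ℝ) (ρ β : ℝ → ℝ) (z : K → ℝ)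
    (xb : (K → ℝ) × (K → ℝ)) : Prop where
  feasible : IsFeasible F bbar xb
  payoff_le : ∀ yb, IsFeasible F bbar yb → payoff F ρ β z yb ≤ payoff F ρ β z xb

variable {F : Finset K} {bbar : ℝ} {ρ β : ℝ → ℝ} {z : K → ℝ} {xb : (K → ℝ) × (K → ℝ)}
  {k : K}

theorem IsOptimal.isMaxOn_bid (hxb : IsOptimal F bbar ρ β z xb) (hk : k ∈ F)
    (hx : 0 < xb.1 k) : IsMaxOn (utility ρ β (z k)) (Set.Icc 0 bbar) (xb.2 k) := by
  intro b hb
  have hfeas : IsFeasible F bbar (xb.1, Function.update xb.2 k b) :=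
    ⟨hxb.feasible.alloc_nonneg, hxb.feasible.sum_alloc_le_one, fun j hj => by
      rcases eq_or_ne j k with rfl | hjk
      · simpa using hb
      · simpa [hjk] using hxb.feasible.bid_mem j hj⟩
  have := Finset.le_of_sum_le_sum_of_eq_of_ne hk (fun j _ hjk => by simp [hjk])
    (hxb.payoff_le _ hfeas)
  simpa using le_of_mul_le_mul_right this hx

theorem IsOptimal.utility_nonneg (hxb : IsOptimal F bbar ρ β z xb) (hk : k ∈ F)
    (hx : 0 < xb.1 k) : 0 ≤ utility ρ β (z k) (xb.2 k) := by
  have hfeas : IsFeasible F bbar (Function.update xb.1 k 0, xb.2) := by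
    have hle : ∀ j ∈ F, Function.update xb.1 k 0 j ≤ xb.1 j := fun j hj => by
      rcases eq_or_ne j k with rfl | hjk
      · simpa using hxb.feasible.alloc_nonneg j hj
      · simp [hjk]
    refine ⟨fun j hj => ?_, (sum_le_sum hle).trans hxb.feasible.sum_alloc_le_one,
      hxb.feasible.bid_mem⟩
    rcases eq_or_ne j k with rfl | hjk
    · simp
    · simpa [hjk] using hxb.feasible.alloc_nonneg j hj
  have := Finset.le_of_sum_le_sum_of_eq_of_ne hk (fun j _ hjk => by simp [hjk])
    (hxb.payoff_le _ hfeas)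
  simp only [Function.update_self, mul_zero] at this
  exact nonneg_of_mul_nonneg_left this hx

theorem eq_zero_of_utility_nonneg {b z : ℝ} (hβρ : ∀ b ∈ Set.Ioc 0 bbar, 0 < β b * ρ b)
    (hz : z ≤ 0) (hb : b ∈ Set.Icc 0 bbar) (hρ : 0 ≤ ρ b) (hu : 0 ≤ utility ρ β z b) :
    b = 0 := by
  by_contra hb0
  have := hβρ b ⟨hb.1.lt_of_ne' hb0, hb.2⟩
  nlinarith [mul_nonpos_of_nonpos_of_nonneg hz hρ, show 0 ≤ (z - β b) * ρ b from hu]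

theorem pos_alloc_of_wins_ne_zero (hxb : IsFeasible F bbar xb) (hk : k ∈ F)
    (hw : wins ρ xb k ≠ 0) : 0 < xb.1 k :=
  (hxb.alloc_nonneg k hk).lt_of_ne' fun h => hw (by simp [wins, h])

theorem IsOptimal.bid_eq_of_wins_ne_zero {xb' : (K → ℝ) × (K → ℝ)}
    (hρ : ∀ b ∈ Set.Icc 0 bbar, 0 ≤ ρ b) (hβρ : ∀ b ∈ Set.Ioc 0 bbar, 0 < β b * ρ b)
    (hunique : ∀ k ∈ F, 0 < z k →
      ∃! b₀, b₀ ∈ Set.Icc 0 bbar ∧ IsMaxOn (utility ρ β (z k)) (Set.Icc 0 bbar) b₀)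
    (hxb : IsOptimal F bbar ρ β z xb) (hxb' : IsOptimal F bbar ρ β z xb') (hk : k ∈ F)
    (hw : wins ρ xb k ≠ 0) (hw' : wins ρ xb' k ≠ 0) : xb.2 k = xb'.2 k := by
  have hx := pos_alloc_of_wins_ne_zero hxb.feasible hk hw
  have hx' := pos_alloc_of_wins_ne_zero hxb'.feasible hk hw'
  have hb := hxb.feasible.bid_mem k hk
  have hb' := hxb'.feasible.bid_mem k hk
  rcases lt_or_ge 0 (z k) with hz | hz
  · exact (hunique k hk hz).unique ⟨hb, hxb.isMaxOn_bid hk hx⟩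
      ⟨hb', hxb'.isMaxOn_bid hk hx'⟩
  · rw [eq_zero_of_utility_nonneg hβρ hz hb (hρ _ hb) (hxb.utility_nonneg hk hx),
      eq_zero_of_utility_nonneg hβρ hz hb' (hρ _ hb') (hxb'.utility_nonneg hk hx')]

section Mix

variable {B : K → ℝ}

theorem payoff_eq_sum_wins (hB : ∀ k ∈ F, wins ρ xb k ≠ 0 → xb.2 k = B k) :
    payoff F ρ β z xb = ∑ k ∈ F, (z k - β (B k)) * wins ρ xb k := by
  refine sum_congr rfl fun k hk => ?_
  by_cases hw : wins ρ xb k = 0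
  · rw [hw, mul_zero, utility, mul_assoc, mul_comm (ρ _), ← wins, hw, mul_zero]
  · rw [utility, hB k hk hw, wins, hB k hk hw]; ring

theorem wins_le_mul_of_bid_eq (hxb : IsFeasible F bbar xb) (hk : k ∈ F) (hρB : 0 ≤ ρ (B k))
    (hB : wins ρ xb k ≠ 0 → xb.2 k = B k) : wins ρ xb k ≤ xb.1 k * ρ (B k) := by
  by_cases hw : wins ρ xb k = 0
  · exact hw ▸ mul_nonneg (hxb.alloc_nonneg k hk) hρB
  · rw [wins, hB hw]

theorem wins_eq_zero_of_bid_eq (hρB : ρ (B k) = 0) (hB : wins ρ xb k ≠ 0 → xb.2 k = B k) :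
    wins ρ xb k = 0 := by
  by_contra hw
  exact hw (by rw [wins, hB hw, hρB, mul_zero])

-- Where `ρ (B k) = 0` the allocation is `0` (as `x / 0 = 0`); both points win nothing there.
noncomputable def mix (ρ : ℝ → ℝ) (B : K → ℝ) (t u : ℝ)
    (xb xb' : (K → ℝ) × (K → ℝ)) : (K → ℝ) × (K → ℝ) :=
  (fun k => (t * wins ρ xb k + u * wins ρ xb' k) / ρ (B k), B)

variable {xb' : (K → ℝ) × (K → ℝ)} {t u : ℝ}

theorem wins_mix (hB : wins ρ xb k ≠ 0 → xb.2 k = B k)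
    (hB' : wins ρ xb' k ≠ 0 → xb'.2 k = B k) :
    wins ρ (mix ρ B t u xb xb') k = t * wins ρ xb k + u * wins ρ xb' k := by
  by_cases hρB : ρ (B k) = 0
  · rw [wins_eq_zero_of_bid_eq hρB hB, wins_eq_zero_of_bid_eq hρB hB', wins, mix, hρB]
    simp
  · exact div_mul_cancel₀ _ hρB

theorem isFeasible_mix (hxb : IsFeasible F bbar xb) (hxb' : IsFeasible F bbar xb')
    (ht : 0 ≤ t) (hu : 0 ≤ u) (htu : t + u = 1) (hρ : ∀ b ∈ Set.Icc 0 bbar, 0 ≤ ρ b)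
    (hBmem : ∀ k ∈ F, B k ∈ Set.Icc 0 bbar)
    (hB : ∀ k ∈ F, wins ρ xb k ≠ 0 → xb.2 k = B k)
    (hB' : ∀ k ∈ F, wins ρ xb' k ≠ 0 → xb'.2 k = B k) :
    IsFeasible F bbar (mix ρ B t u xb xb') := by
  have hρB : ∀ k ∈ F, 0 ≤ ρ (B k) := fun k hk => hρ _ (hBmem k hk)
  have hwins : ∀ {xb}, IsFeasible F bbar xb → ∀ k ∈ F, 0 ≤ wins ρ xb k := fun hxb k hk =>
    mul_nonneg (hxb.alloc_nonneg k hk) (hρ _ (hxb.bid_mem k hk))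
  have hle : ∀ k ∈ F, (mix ρ B t u xb xb').1 k ≤ t * xb.1 k + u * xb'.1 k := fun k hk => by
    rcases (hρB k hk).eq_or_lt with h0 | hpos
    · simp only [mix, ← h0, div_zero]
      exact add_nonneg (mul_nonneg ht (hxb.alloc_nonneg k hk))
        (mul_nonneg hu (hxb'.alloc_nonneg k hk))
    · rw [mix, div_le_iff₀ hpos, add_mul, mul_assoc, mul_assoc]
      gcongr
      · exact wins_le_mul_of_bid_eq hxb hk (hρB k hk) (hB k hk)
      · exact wins_le_mul_of_bid_eq hxb' hk (hρB k hk) (hB' k hk)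
  refine ⟨fun k hk => div_nonneg ?_ (hρB k hk), ?_, hBmem⟩
  · exact add_nonneg (mul_nonneg ht (hwins hxb k hk)) (mul_nonneg hu (hwins hxb' k hk))
  · calc ∑ k ∈ F, (mix ρ B t u xb xb').1 k
          ≤ ∑ k ∈ F, (t * xb.1 k + u * xb'.1 k) := sum_le_sum hle
      _ = t * ∑ k ∈ F, xb.1 k + u * ∑ k ∈ F, xb'.1 k := by
        rw [sum_add_distrib, mul_sum, mul_sum]
      _ ≤ t * 1 + u * 1 := by gcongr <;> [exact hxb.sum_alloc_le_one; exact hxb'.sum_alloc_le_one]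
      _ = 1 := by rw [mul_one, mul_one, htu]

theorem payoff_mix (hB : ∀ k ∈ F, wins ρ xb k ≠ 0 → xb.2 k = B k)
    (hB' : ∀ k ∈ F, wins ρ xb' k ≠ 0 → xb'.2 k = B k) :
    payoff F ρ β z (mix ρ B t u xb xb') =
      t * payoff F ρ β z xb + u * payoff F ρ β z xb' := by
  rw [payoff_eq_sum_wins (B := B) fun _ _ _ => rfl, payoff_eq_sum_wins hB, payoff_eq_sum_wins hB',
    mul_sum, mul_sum, ← sum_add_distrib]
  refine sum_congr rfl fun k hk => ?_
  rw [wins_mix (hB k hk) (hB' k hk)]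
  ring

end Mix

theorem convex_outcomeVec_image_isOptimal (c : K → ℝ)
    (hρ : ∀ b ∈ Set.Icc 0 bbar, 0 ≤ ρ b) (hβρ : ∀ b ∈ Set.Ioc 0 bbar, 0 < β b * ρ b)
    (hunique : ∀ k ∈ F, 0 < z k →
      ∃! b₀, b₀ ∈ Set.Icc 0 bbar ∧ IsMaxOn (utility ρ β (z k)) (Set.Icc 0 bbar) b₀) :
    Convex ℝ (outcomeVec c F ρ '' {xb | IsOptimal F bbar ρ β z xb}) := by
  rintro _ ⟨xb, hxb, rfl⟩ _ ⟨xb', hxb', rfl⟩ t u ht hu htu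
  set B : K → ℝ := fun k => if wins ρ xb k = 0 then xb'.2 k else xb.2 k
  have hB : ∀ k ∈ F, wins ρ xb k ≠ 0 → xb.2 k = B k := fun k _ hw => by simp [B, hw]
  have hB' : ∀ k ∈ F, wins ρ xb' k ≠ 0 → xb'.2 k = B k := fun k hk hw' => by
    by_cases hw : wins ρ xb k = 0
    · simp [B, hw]
    · simp only [B, hw, if_false]
      exact (hxb.bid_eq_of_wins_ne_zero hρ hβρ hunique hxb' hk hw hw').symm
  have hBmem : ∀ k ∈ F, B k ∈ Set.Icc 0 bbar := fun k hk => by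
    by_cases hw : wins ρ xb k = 0
    · simpa [B, hw] using hxb'.feasible.bid_mem k hk
    · simpa [B, hw] using hxb.feasible.bid_mem k hk
  have hpayoff : payoff F ρ β z xb' = payoff F ρ β z xb :=
    le_antisymm (hxb.payoff_le _ hxb'.feasible) (hxb'.payoff_le _ hxb.feasible)
  refine ⟨mix ρ B t u xb xb',
    ⟨isFeasible_mix hxb.feasible hxb'.feasible ht hu htu hρ hBmem hB hB', fun yb hyb => ?_⟩,
    ?_⟩
  · rw [payoff_mix hB hB', hpayoff, ← add_mul, htu, one_mul]
    exact hxb.payoff_le yb hyb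
  · funext k
    by_cases hk : k ∈ F
    · simp only [outcomeVec, hk, if_true, Pi.add_apply, Pi.smul_apply, smul_eq_mul,
        wins_mix (hB k hk) (hB' k hk)]
      ring
    · simp [outcomeVec, hk]

end Bidding

open Bidding

theorem stmt_9_general
    {I K : Type*} [Fintype K] [DecidableEq I] [DecidableEq K]
    (E : Finset (I × K))
    (bbar : I → ℝ)
    (ρ β : I → ℝ → ℝ)
    (hρ01 : ∀ i, ∀ b ∈ Set.Icc (0:ℝ) (bbar i), ρ i b ∈ Set.Icc (0:ℝ) 1)
    (s : I → ℝ) (hs : ∀ i, 0 < s i)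
    (r : I → K → ℝ) (hr : ∀ i k, (i, k) ∈ E → 0 < r i k)
    (h : I → ℝ → ℝ → ℝ)
    (hdef : ∀ i z b, h i z b = (z - β i b) * ρ i b)
    (hβρpos : ∀ i, ∀ b ∈ Set.Ioc (0:ℝ) (bbar i), 0 < β i b * ρ i b)
    (Si : I → Set ((K → ℝ) × (K → ℝ)))
    (hSi : ∀ i, Si i = {xb | (∀ k, (i, k) ∈ E → 0 ≤ xb.1 k) ∧
      (∑ k ∈ Finset.univ.filter (fun k => (i, k) ∈ E), xb.1 k) ≤ 1 ∧
      (∀ k, (i, k) ∈ E → xb.2 k ∈ Set.Icc (0:ℝ) (bbar i))})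
    (obji : I → (K → ℝ) → (K → ℝ) → (K → ℝ) → ℝ)
    (hobji : ∀ i lam x b, obji i lam x b =
      ∑ k ∈ Finset.univ.filter (fun k => (i, k) ∈ E), h i (r i k * (1 - lam k)) (b k) * s i * x k)
    (Sistar : I → (K → ℝ) → Set ((K → ℝ) × (K → ℝ)))
    (hSistar : ∀ i lam, Sistar i lam =
      {xb | xb ∈ Si i ∧ ∀ yb ∈ Si i, obji i lam yb.1 yb.2 ≤ obji i lam xb.1 xb.2})
    (vi : I → (K → ℝ) → (K → ℝ) → K → ℝ)
    (hvi : ∀ i x b k, vi i x b k = if (i, k) ∈ E then r i k * s i * x k * ρ i (b k) else 0)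
    (lam : K → ℝ)
    (hUS : ∀ i k, (i, k) ∈ E → lam k < 1 →
      ∃! b0, b0 ∈ Set.Icc (0:ℝ) (bbar i) ∧
        ∀ b ∈ Set.Icc (0:ℝ) (bbar i),
          h i (r i k * (1 - lam k)) b ≤ h i (r i k * (1 - lam k)) b0) :
    ∀ i, Convex ℝ
      {w : K → ℝ | ∃ xb ∈ Sistar i lam, w = fun k => vi i xb.1 xb.2 k} := by
  intro i
  set F := Finset.univ.filter fun k => (i, k) ∈ E
  set z : K → ℝ := fun k => r i k * (1 - lam k)
  have hF : ∀ k, k ∈ F ↔ (i, k) ∈ E := by simp [F]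
  have hfeas : ∀ xb, xb ∈ Si i ↔ IsFeasible F (bbar i) xb := fun xb => by
    rw [hSi]
    exact ⟨fun ⟨h₁, h₂, h₃⟩ => ⟨fun k hk => h₁ k ((hF k).1 hk), h₂,
        fun k hk => h₃ k ((hF k).1 hk)⟩,
      fun ⟨h₁, h₂, h₃⟩ => ⟨fun k hk => h₁ k ((hF k).2 hk), h₂,
        fun k hk => h₃ k ((hF k).2 hk)⟩⟩
  have hobj : ∀ xb, obji i lam xb.1 xb.2 = s i * payoff F (ρ i) (β i) z xb := fun xb => by
    rw [hobji, payoff, mul_sum]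
    exact sum_congr rfl fun k _ => by rw [hdef, utility]; ring
  have hopt : Sistar i lam = {xb | IsOptimal F (bbar i) (ρ i) (β i) z xb} := by
    ext xb
    simp only [hSistar, Set.mem_ofPred_eq, hfeas, hobj, mul_le_mul_iff_right₀ (hs i)]
    exact ⟨fun ⟨h₁, h₂⟩ => ⟨h₁, h₂⟩, fun ⟨h₁, h₂⟩ => ⟨h₁, h₂⟩⟩
  have hunique : ∀ k ∈ F, 0 < z k →
      ∃! b₀, b₀ ∈ Set.Icc 0 (bbar i) ∧
        IsMaxOn (utility (ρ i) (β i) (z k)) (Set.Icc 0 (bbar i)) b₀ := by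
    intro k hk hz
    have hkE := (hF k).1 hk
    simpa only [isMaxOn_iff, utility, hdef] using
      hUS i k hkE (sub_pos.1 (pos_of_mul_pos_right hz (hr i k hkE).le))
  convert convex_outcomeVec_image_isOptimal (fun k => r i k * s i) (fun b hb => (hρ01 i b hb).1)
    (hβρpos i) hunique using 1
  ext w
  simp only [hopt, Set.mem_ofPred_eq, Set.mem_image, eq_comm (a := w)]
  refine exists_congr fun xb => and_congr_right fun _ => ?_
  rw [show (fun k => vi i xb.1 xb.2 k) = outcomeVec (fun k => r i k * s i) F (ρ i) xb from
    funext fun k => by simp [hvi, outcomeVec, wins, hF, mul_assoc]]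

theorem stmt_9
    {I K : Type*} [Fintype I] [Fintype K] [DecidableEq I] [DecidableEq K]
    (E : Finset (I × K))
    (bbar : I → ℝ) (hbbar : ∀ i, 0 < bbar i)
    (ρ β : I → ℝ → ℝ)
    (hρmono : ∀ i, MonotoneOn (ρ i) (Set.Icc 0 (bbar i)))
    (hβmono : ∀ i, MonotoneOn (β i) (Set.Icc 0 (bbar i)))
    (hρ01 : ∀ i, ∀ b ∈ Set.Icc (0:ℝ) (bbar i), ρ i b ∈ Set.Icc (0:ℝ) 1)
    (hβb : ∀ i, ∀ b ∈ Set.Icc (0:ℝ) (bbar i), β i b ∈ Set.Icc (0:ℝ) b)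
    (s : I → ℝ) (hs : ∀ i, 0 < s i)
    (r : I → K → ℝ) (hr : ∀ i k, (i, k) ∈ E → 0 < r i k)
    (h : I → ℝ → ℝ → ℝ)
    (hdef : ∀ i z b, h i z b = (z - β i b) * ρ i b)
    (hρcont : ∀ i, ContinuousOn (ρ i) (Set.Icc 0 (bbar i)))
    (hβcont : ∀ i, ContinuousOn (β i) (Set.Icc 0 (bbar i)))
    (hβρpos : ∀ i, ∀ b ∈ Set.Ioc (0:ℝ) (bbar i), 0 < β i b * ρ i b)
    (Si : I → Set ((K → ℝ) × (K → ℝ)))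
    (hSi : ∀ i, Si i = {xb | (∀ k, (i, k) ∈ E → 0 ≤ xb.1 k) ∧
      (∑ k ∈ Finset.univ.filter (fun k => (i, k) ∈ E), xb.1 k) ≤ 1 ∧
      (∀ k, (i, k) ∈ E → xb.2 k ∈ Set.Icc (0:ℝ) (bbar i))})
    (obji : I → (K → ℝ) → (K → ℝ) → (K → ℝ) → ℝ)
    (hobji : ∀ i lam x b, obji i lam x b =
      ∑ k ∈ Finset.univ.filter (fun k => (i, k) ∈ E), h i (r i k * (1 - lam k)) (b k) * s i * x k)
    (Sistar : I → (K → ℝ) → Set ((K → ℝ) × (K → ℝ)))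
    (hSistar : ∀ i lam, Sistar i lam =
      {xb | xb ∈ Si i ∧ ∀ yb ∈ Si i, obji i lam yb.1 yb.2 ≤ obji i lam xb.1 xb.2})
    (vi : I → (K → ℝ) → (K → ℝ) → K → ℝ)
    (hvi : ∀ i x b k, vi i x b k = if (i, k) ∈ E then r i k * s i * x k * ρ i (b k) else 0)
    (lam : K → ℝ)
    (hUS : ∀ i k, (i, k) ∈ E → lam k < 1 →
      ∃! b0, b0 ∈ Set.Icc (0:ℝ) (bbar i) ∧
        ∀ b ∈ Set.Icc (0:ℝ) (bbar i),
          h i (r i k * (1 - lam k)) b ≤ h i (r i k * (1 - lam k)) b0) :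
    ∀ i, Convex ℝ
      {w : K → ℝ | ∃ xb ∈ Sistar i lam, w = fun k => vi i xb.1 xb.2 k} :=
  stmt_9_general E bbar ρ β hρ01 s hs r hr h hdef hβρpos Si hSi obji hobji Sistar hSistar vi hvi lam
    hUS
end

section
/- Let b̄ > 0 and let ρ, β : [0, b̄] → ℝ be nondecreasing and differentiable with β(0) = 0, ρ'(b) > 0 for all b ∈ [0, b̄], and g(b) := (ρ(b)β(b))'/ρ'(b) strictly increasing on (0, b̄]. Fix r > 0 and define h(b) = (r − β(b))ρ(b) for b ∈ [0, b̄]. Then h has a unique maximizer b* on [0, b̄], given by b* = b̄ if g(b̄) ≤ r, and b* = inf{ b ∈ (0, b̄] : g(b) > r } otherwise. -/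
/-! Since `h' = ρ' (r - β) - ρ β' = ρ' (r - g)` and `ρ' > 0`, the sign of `h'` is that of `r - g`.
As `g` is strictly increasing, it is below `r` before `b*` and above `r` after it, so `h` is
strictly increasing on `[0, b*]` and strictly decreasing on `[b*, b̄]`. -/

open Set

open scoped BigOperators Classical

theorem StrictMonoOn.isMaxOn_and_unique_of_strictAntiOn {f : ℝ → ℝ} {a m c : ℝ}
    (hinc : StrictMonoOn f (Icc a m)) (hdec : StrictAntiOn f (Icc m c)) (hm : m ∈ Icc a c) :
    IsMaxOn f (Icc a c) m ∧ ∀ b ∈ Icc a c, IsMaxOn f (Icc a c) b → b = m := by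
  have hmax : IsMaxOn f (Icc a c) m := fun b hb => by
    rcases le_or_gt b m with hbm | hmb
    · exact hinc.monotoneOn ⟨hb.1, hbm⟩ ⟨hm.1, le_rfl⟩ hbm
    · exact (hdec ⟨le_rfl, hm.2⟩ ⟨hmb.le, hb.2⟩ hmb).le
  refine ⟨hmax, fun b hb hbmax => le_antisymm ?_ ?_⟩
  · by_contra! hmb
    exact (hdec ⟨le_rfl, hm.2⟩ ⟨hmb.le, hb.2⟩ hmb).not_ge (hbmax hm)
  · by_contra! hbm
    exact (hinc ⟨hb.1, hbm.le⟩ ⟨hm.1, le_rfl⟩ hbm).not_ge (hbmax hm)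

theorem strictMonoOn_Icc_of_hasDerivWithinAt_pos {f f' : ℝ → ℝ} {a c : ℝ}
    (hf : ∀ x ∈ Icc a c, HasDerivWithinAt f (f' x) (Icc a c) x)
    (hpos : ∀ x ∈ Ioo a c, 0 < f' x) : StrictMonoOn f (Icc a c) :=
  strictMonoOn_of_hasDerivWithinAt_pos (convex_Icc a c)
    (fun x hx => (hf x hx).continuousWithinAt)
    (fun x hx => by
      rw [interior_Icc] at hx ⊢
      exact (hf x (Ioo_subset_Icc_self hx)).mono Ioo_subset_Icc_self)
    (by simpa only [interior_Icc] using hpos)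

theorem strictAntiOn_Icc_of_hasDerivWithinAt_neg {f f' : ℝ → ℝ} {a c : ℝ}
    (hf : ∀ x ∈ Icc a c, HasDerivWithinAt f (f' x) (Icc a c) x)
    (hneg : ∀ x ∈ Ioo a c, f' x < 0) : StrictAntiOn f (Icc a c) :=
  strictAntiOn_of_hasDerivWithinAt_neg (convex_Icc a c)
    (fun x hx => (hf x hx).continuousWithinAt)
    (fun x hx => by
      rw [interior_Icc] at hx ⊢
      exact (hf x (Ioo_subset_Icc_self hx)).mono Ioo_subset_Icc_self)
    (by simpa only [interior_Icc] using hneg)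

theorem StrictMonoOn.threshold_spec {g : ℝ → ℝ} {a c r t : ℝ} (hac : a < c)
    (hg : StrictMonoOn g (Ioc a c))
    (ht : t = if g c ≤ r then c else sInf {x | x ∈ Ioc a c ∧ r < g x}) :
    t ∈ Icc a c ∧ (∀ b ∈ Ioo a t, g b < r) ∧ ∀ b ∈ Ioc t c, r < g b := by
  split_ifs at ht with hc
  · subst ht
    exact ⟨⟨hac.le, le_rfl⟩, fun b hb => (hg ⟨hb.1, hb.2.le⟩ ⟨hac, le_rfl⟩ hb.2).trans_le hc,
      fun b hb => absurd hb.2 hb.1.not_ge⟩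
  replace hc := not_le.1 hc
  subst ht
  set S := {x | x ∈ Ioc a c ∧ r < g x}
  have hcS : c ∈ S := ⟨⟨hac, le_rfl⟩, hc⟩
  have hbdd : BddBelow S := ⟨a, fun x hx => hx.1.1.le⟩
  have htc : sInf S ≤ c := csInf_le hbdd hcS
  refine ⟨⟨le_csInf ⟨c, hcS⟩ fun x hx => hx.1.1.le, htc⟩, fun b hb => ?_, fun b hb => ?_⟩
  · obtain ⟨b', hbb', hb't⟩ := exists_between hb.2
    have hb' : b' ∈ Ioc a c := ⟨hb.1.trans hbb', hb't.le.trans htc⟩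
    have hgb' : g b' ≤ r := not_lt.1 fun hr => notMem_of_lt_csInf hb't hbdd ⟨hb', hr⟩
    exact (hg ⟨hb.1, hbb'.le.trans hb'.2⟩ hb' hbb').trans_le hgb'
  · obtain ⟨s, hs, hsb⟩ := exists_lt_of_csInf_lt ⟨c, hcS⟩ hb.1
    exact hs.2.trans (hg hs.1 ⟨hs.1.1.trans hsb, hb.2⟩ hsb)

theorem hasDerivWithinAt_profit {ρ β : ℝ → ℝ} {dρ dβ r x : ℝ} {s : Set ℝ}
    (hρ : HasDerivWithinAt ρ dρ s x) (hβ : HasDerivWithinAt β dβ s x) (hdρ : dρ ≠ 0) :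
    HasDerivWithinAt (fun b => (r - β b) * ρ b) (dρ * (r - (dρ * β x + ρ x * dβ) / dρ)) s x := by
  have hval : dρ * (r - (dρ * β x + ρ x * dβ) / dρ) = -dβ * ρ x + (r - β x) * dρ := by
    rw [mul_sub, mul_div_cancel₀ _ hdρ]
    ring
  exact hval ▸ (hβ.const_sub r).mul hρ

theorem stmt_12_general
    (bbar : ℝ) (hbbar : 0 < bbar)
    (ρ β dρ dβ : ℝ → ℝ)
    (hρd : ∀ b ∈ Set.Icc (0:ℝ) bbar, HasDerivWithinAt ρ (dρ b) (Set.Icc 0 bbar) b)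
    (hβd : ∀ b ∈ Set.Icc (0:ℝ) bbar, HasDerivWithinAt β (dβ b) (Set.Icc 0 bbar) b)
    (hdρpos : ∀ b ∈ Set.Icc (0:ℝ) bbar, 0 < dρ b)
    (g : ℝ → ℝ) (hg : ∀ b, g b = (dρ b * β b + ρ b * dβ b) / dρ b)
    (hgmono : StrictMonoOn g (Set.Ioc 0 bbar))
    (r : ℝ)
    (h : ℝ → ℝ) (hh : ∀ b, h b = (r - β b) * ρ b)
    (bstar : ℝ)
    (hbstar : bstar = if g bbar ≤ r then bbar
      else sInf {b | b ∈ Set.Ioc (0:ℝ) bbar ∧ r < g b}) :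
    bstar ∈ Set.Icc (0:ℝ) bbar ∧ (∀ b ∈ Set.Icc (0:ℝ) bbar, h b ≤ h bstar) ∧
      ∀ b ∈ Set.Icc (0:ℝ) bbar, (∀ b' ∈ Set.Icc (0:ℝ) bbar, h b' ≤ h b) → b = bstar := by
  obtain ⟨hbs, hlt, hgt⟩ := hgmono.threshold_spec hbbar hbstar
  have hderiv (b) (hb : b ∈ Icc 0 bbar) :
      HasDerivWithinAt h (dρ b * (r - g b)) (Icc 0 bbar) b := by
    rw [funext hh, hg b]
    exact hasDerivWithinAt_profit (hρd b hb) (hβd b hb) (hdρpos b hb).ne'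
  have hinc : StrictMonoOn h (Icc 0 bstar) := by
    have hsub : Icc 0 bstar ⊆ Icc 0 bbar := Icc_subset_Icc le_rfl hbs.2
    refine strictMonoOn_Icc_of_hasDerivWithinAt_pos (fun x hx => (hderiv x (hsub hx)).mono hsub)
      fun x hx => ?_
    exact mul_pos (hdρpos x (hsub (Ioo_subset_Icc_self hx))) (sub_pos.2 (hlt x hx))
  have hdec : StrictAntiOn h (Icc bstar bbar) := by
    have hsub : Icc bstar bbar ⊆ Icc 0 bbar := Icc_subset_Icc hbs.1 le_rfl
    refine strictAntiOn_Icc_of_hasDerivWithinAt_neg (fun x hx => (hderiv x (hsub hx)).mono hsub)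
      fun x hx => ?_
    exact mul_neg_of_pos_of_neg (hdρpos x (hsub (Ioo_subset_Icc_self hx)))
      (sub_neg.2 (hgt x ⟨hx.1, hx.2.le⟩))
  obtain ⟨hmax, huniq⟩ := hinc.isMaxOn_and_unique_of_strictAntiOn hdec hbs
  exact ⟨hbs, isMaxOn_iff.1 hmax, fun b hb hbmax => huniq b hb (isMaxOn_iff.2 hbmax)⟩

theorem stmt_12
    (bbar : ℝ) (hbbar : 0 < bbar)
    (ρ β dρ dβ : ℝ → ℝ)
    (hρmono : MonotoneOn ρ (Set.Icc 0 bbar))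
    (hβmono : MonotoneOn β (Set.Icc 0 bbar))
    (hβ0 : β 0 = 0)
    (hρd : ∀ b ∈ Set.Icc (0:ℝ) bbar, HasDerivWithinAt ρ (dρ b) (Set.Icc 0 bbar) b)
    (hβd : ∀ b ∈ Set.Icc (0:ℝ) bbar, HasDerivWithinAt β (dβ b) (Set.Icc 0 bbar) b)
    (hdρpos : ∀ b ∈ Set.Icc (0:ℝ) bbar, 0 < dρ b)
    (g : ℝ → ℝ) (hg : ∀ b, g b = (dρ b * β b + ρ b * dβ b) / dρ b)
    (hgmono : StrictMonoOn g (Set.Ioc 0 bbar))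
    (r : ℝ) (hr : 0 < r)
    (h : ℝ → ℝ) (hh : ∀ b, h b = (r - β b) * ρ b)
    (bstar : ℝ)
    (hbstar : bstar = if g bbar ≤ r then bbar
      else sInf {b | b ∈ Set.Ioc (0:ℝ) bbar ∧ r < g b}) :
    bstar ∈ Set.Icc (0:ℝ) bbar ∧ (∀ b ∈ Set.Icc (0:ℝ) bbar, h b ≤ h bstar) ∧
      ∀ b ∈ Set.Icc (0:ℝ) bbar, (∀ b' ∈ Set.Icc (0:ℝ) bbar, h b' ≤ h b) → b = bstar :=
  stmt_12_general bbar hbbar ρ β dρ dβ hρd hβd hdρpos g hg hgmono r h hh bstar hbstar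
end

section
/- Suppose ρ_i and β_i are continuous on [0, b̄_i] and β_i(b)ρ_i(b) > 0 for all b ∈ (0, b̄_i], for every i ∈ I light fix λ ∈ ℝ^K and fix i ∈ I such that λ_k ≥ 1 for all k ∈ K_i. Then ψ_i(λ) = 0, and S_i*(λ) = { (x_i, b_i) ∈ S_i : x_{ik} b_{ik} = 0 for every k ∈ K_i with λ_k = 1, and x_{ik} ρ_i(b_{ik}) = 0 for every k ∈ K_i with λ_k > 1 }. -/
/-! With `λ_k ≥ 1` every coefficient `r_{ik}(1 - λ_k)` is nonpositive, so each summand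
`(r_{ik}(1 - λ_k) - β_i(b_{ik})) ρ_i(b_{ik}) s_i x_{ik}` of the objective is `≤ 0`, and the
objective vanishes at `x_i = 0`; hence `ψ_i(λ) = 0` and the maximizers are exactly the feasible
points at which every summand vanishes. When `λ_k = 1` the summand is `-β_i(b) ρ_i(b) s_i x_{ik}`,
and `β_i ρ_i` vanishes on `[0, b̄_i]` only at `0`; when `λ_k > 1` the first factor is negative. -/

section Optimization

variable {α : Type*} {S : Set α} {f : α → ℝ}

theorem iSup_coe_eq_zero_of_nonpos (hle : ∀ x ∈ S, f x ≤ 0) {x₀ : α} (hx₀ : x₀ ∈ S)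
    (hfx₀ : f x₀ = 0) : ⨆ x ∈ S, (f x : EReal) = 0 :=
  le_antisymm (iSup₂_le fun x hx => EReal.coe_nonpos.mpr (hle x hx))
    (le_iSup₂_of_le x₀ hx₀ (by rw [hfx₀]; rfl))

theorem setOf_forall_le_eq_setOf_eq_zero (hle : ∀ x ∈ S, f x ≤ 0) {x₀ : α} (hx₀ : x₀ ∈ S)
    (hfx₀ : f x₀ = 0) :
    {x | x ∈ S ∧ ∀ y ∈ S, f y ≤ f x} = {x | x ∈ S ∧ f x = 0} := by
  ext x
  refine and_congr_right fun hx => ⟨fun hmax => ?_, fun hfx y hy => hfx ▸ hle y hy⟩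
  exact le_antisymm (hle x hx) (hfx₀ ▸ hmax x₀ hx₀)

end Optimization

section Summand

variable {r l β ρ s x b : ℝ}

theorem summand_nonpos (hr : 0 < r) (hl : 1 ≤ l) (hβ : 0 ≤ β) (hρ : 0 ≤ ρ) (hs : 0 < s)
    (hx : 0 ≤ x) : (r * (1 - l) - β) * ρ * s * x ≤ 0 := by
  have hz : r * (1 - l) - β ≤ 0 := by nlinarith
  exact mul_nonpos_of_nonpos_of_nonneg
    (mul_nonpos_of_nonpos_of_nonneg (mul_nonpos_of_nonpos_of_nonneg hz hρ) hs.le) hx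

theorem summand_eq_zero_iff_of_eq_one (hs : s ≠ 0) (hβρ : β * ρ = 0 ↔ b = 0) :
    (r * (1 - 1) - β) * ρ * s * x = 0 ↔ x * b = 0 := by
  have hsummand : (r * (1 - 1) - β) * ρ * s * x = -(s * ((β * ρ) * x)) := by ring
  rw [hsummand, neg_eq_zero, mul_eq_zero, mul_eq_zero, hβρ, mul_eq_zero]
  simp only [hs, false_or, or_comm]

theorem summand_eq_zero_iff_of_one_lt (hr : 0 < r) (hl : 1 < l) (hβ : 0 ≤ β) (hs : s ≠ 0) :
    (r * (1 - l) - β) * ρ * s * x = 0 ↔ x * ρ = 0 := by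
  have hz : r * (1 - l) - β ≠ 0 := by nlinarith
  have hsummand : (r * (1 - l) - β) * ρ * s * x = ((r * (1 - l) - β) * s) * (x * ρ) := by ring
  rw [hsummand, mul_eq_zero, mul_eq_zero]
  simp only [hz, hs, false_or]

theorem summand_eq_zero_iff (hr : 0 < r) (hl : 1 ≤ l) (hβ : 0 ≤ β) (hs : s ≠ 0)
    (hβρ : β * ρ = 0 ↔ b = 0) :
    (r * (1 - l) - β) * ρ * s * x = 0 ↔ (l = 1 → x * b = 0) ∧ (1 < l → x * ρ = 0) := by
  rcases hl.eq_or_lt with rfl | hl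
  · simp only [lt_irrefl, false_imp_iff, and_true, forall_const]
    exact summand_eq_zero_iff_of_eq_one hs hβρ
  · simp only [hl.ne', false_imp_iff, true_and, hl, forall_const]
    exact summand_eq_zero_iff_of_one_lt hr hl hβ hs

end Summand

theorem mul_eq_zero_iff_eq_zero_of_pos_on_Ioc {β ρ : ℝ → ℝ} {c b : ℝ}
    (hβ0 : β 0 = 0) (hpos : ∀ b ∈ Set.Ioc 0 c, 0 < β b * ρ b) (hb : b ∈ Set.Icc 0 c) :
    β b * ρ b = 0 ↔ b = 0 := by
  refine ⟨fun h0 => ?_, fun hb0 => by rw [hb0, hβ0, zero_mul]⟩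
  by_contra hne
  exact (hpos b ⟨lt_of_le_of_ne hb.1 (Ne.symm hne), hb.2⟩).ne' h0

theorem stmt_17_general
    {I K : Type*} [Fintype K] [DecidableEq I] [DecidableEq K]
    (E : Finset (I × K))
    (bbar : I → ℝ) (hbbar : ∀ i, 0 < bbar i)
    (ρ β : I → ℝ → ℝ)
    (hρ01 : ∀ i, ∀ b ∈ Set.Icc (0:ℝ) (bbar i), ρ i b ∈ Set.Icc (0:ℝ) 1)
    (hβb : ∀ i, ∀ b ∈ Set.Icc (0:ℝ) (bbar i), β i b ∈ Set.Icc (0:ℝ) b)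
    (s : I → ℝ) (hs : ∀ i, 0 < s i)
    (r : I → K → ℝ) (hr : ∀ i k, (i, k) ∈ E → 0 < r i k)
    (h : I → ℝ → ℝ → ℝ)
    (hdef : ∀ i z b, h i z b = (z - β i b) * ρ i b)
    (hβρpos : ∀ i, ∀ b ∈ Set.Ioc (0:ℝ) (bbar i), 0 < β i b * ρ i b)
    (Si : I → Set ((K → ℝ) × (K → ℝ)))
    (hSi : ∀ i, Si i = {xb | (∀ k, (i, k) ∈ E → 0 ≤ xb.1 k) ∧
      (∑ k ∈ Finset.univ.filter (fun k => (i, k) ∈ E), xb.1 k) ≤ 1 ∧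
      (∀ k, (i, k) ∈ E → xb.2 k ∈ Set.Icc (0:ℝ) (bbar i))})
    (obji : I → (K → ℝ) → (K → ℝ) → (K → ℝ) → ℝ)
    (hobji : ∀ i lam x b, obji i lam x b =
      ∑ k ∈ Finset.univ.filter (fun k => (i, k) ∈ E), h i (r i k * (1 - lam k)) (b k) * s i * x k)
    (Sistar : I → (K → ℝ) → Set ((K → ℝ) × (K → ℝ)))
    (hSistar : ∀ i lam, Sistar i lam =
      {xb | xb ∈ Si i ∧ ∀ yb ∈ Si i, obji i lam yb.1 yb.2 ≤ obji i lam xb.1 xb.2})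
    (psi : I → (K → ℝ) → EReal)
    (hpsi : ∀ i lam, psi i lam = ⨆ xb ∈ Si i, ((obji i lam xb.1 xb.2 : ℝ) : EReal))
    (lam : K → ℝ) (i : I)
    (hge1 : ∀ k, (i, k) ∈ E → 1 ≤ lam k) :
    psi i lam = 0 ∧
      Sistar i lam = {xb | xb ∈ Si i ∧ ∀ k, (i, k) ∈ E →
        (lam k = 1 → xb.1 k * xb.2 k = 0) ∧
        (1 < lam k → xb.1 k * ρ i (xb.2 k) = 0)} := by
  have h0mem : (0 : ℝ) ∈ Set.Icc 0 (bbar i) := ⟨le_rfl, (hbbar i).le⟩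
  have hβ0 : β i 0 = 0 := le_antisymm (hβb i 0 h0mem).2 (hβb i 0 h0mem).1
  have hsummand : ∀ xb ∈ Si i, ∀ k, (i, k) ∈ E →
      h i (r i k * (1 - lam k)) (xb.2 k) * s i * xb.1 k ≤ 0 ∧
      (h i (r i k * (1 - lam k)) (xb.2 k) * s i * xb.1 k = 0 ↔
        (lam k = 1 → xb.1 k * xb.2 k = 0) ∧ (1 < lam k → xb.1 k * ρ i (xb.2 k) = 0)) := by
    intro xb hxb k hk
    rw [hSi] at hxb
    have hb := hxb.2.2 k hk
    rw [hdef]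
    exact ⟨summand_nonpos (hr i k hk) (hge1 k hk) (hβb i _ hb).1 (hρ01 i _ hb).1 (hs i)
        (hxb.1 k hk),
      summand_eq_zero_iff (hr i k hk) (hge1 k hk) (hβb i _ hb).1 (hs i).ne'
        (mul_eq_zero_iff_eq_zero_of_pos_on_Ioc hβ0 (hβρpos i) hb)⟩
  have hle : ∀ xb ∈ Si i, obji i lam xb.1 xb.2 ≤ 0 := fun xb hxb => by
    rw [hobji]
    exact Finset.sum_nonpos fun k hk => (hsummand xb hxb k (Finset.mem_filter.mp hk).2).1
  have hzero : ((fun _ => 0, fun _ => 0) : (K → ℝ) × (K → ℝ)) ∈ Si i := by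
    rw [hSi]
    exact ⟨fun _ _ => le_rfl, by simp, fun _ _ => h0mem⟩
  have hobj0 : obji i lam (fun _ => 0) (fun _ => 0) = 0 := by simp [hobji]
  refine ⟨by rw [hpsi]; exact iSup_coe_eq_zero_of_nonpos hle hzero hobj0, ?_⟩
  rw [hSistar, setOf_forall_le_eq_setOf_eq_zero hle hzero hobj0]
  ext xb
  refine and_congr_right fun hxb => ?_
  rw [hobji, Finset.sum_eq_zero_iff_of_nonpos fun k hk =>
    (hsummand xb hxb k (Finset.mem_filter.mp hk).2).1]
  simp only [Finset.mem_filter, Finset.mem_univ, true_and]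
  exact forall₂_congr fun k hk => (hsummand xb hxb k hk).2

theorem stmt_17
    {I K : Type*} [Fintype I] [Fintype K] [DecidableEq I] [DecidableEq K]
    (E : Finset (I × K))
    (bbar : I → ℝ) (hbbar : ∀ i, 0 < bbar i)
    (ρ β : I → ℝ → ℝ)
    (hρmono : ∀ i, MonotoneOn (ρ i) (Set.Icc 0 (bbar i)))
    (hβmono : ∀ i, MonotoneOn (β i) (Set.Icc 0 (bbar i)))
    (hρ01 : ∀ i, ∀ b ∈ Set.Icc (0:ℝ) (bbar i), ρ i b ∈ Set.Icc (0:ℝ) 1)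
    (hβb : ∀ i, ∀ b ∈ Set.Icc (0:ℝ) (bbar i), β i b ∈ Set.Icc (0:ℝ) b)
    (s : I → ℝ) (hs : ∀ i, 0 < s i)
    (r : I → K → ℝ) (hr : ∀ i k, (i, k) ∈ E → 0 < r i k)
    (h : I → ℝ → ℝ → ℝ)
    (hdef : ∀ i z b, h i z b = (z - β i b) * ρ i b)
    (hρcont : ∀ i, ContinuousOn (ρ i) (Set.Icc 0 (bbar i)))
    (hβcont : ∀ i, ContinuousOn (β i) (Set.Icc 0 (bbar i)))
    (hβρpos : ∀ i, ∀ b ∈ Set.Ioc (0:ℝ) (bbar i), 0 < β i b * ρ i b)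
    (Si : I → Set ((K → ℝ) × (K → ℝ)))
    (hSi : ∀ i, Si i = {xb | (∀ k, (i, k) ∈ E → 0 ≤ xb.1 k) ∧
      (∑ k ∈ Finset.univ.filter (fun k => (i, k) ∈ E), xb.1 k) ≤ 1 ∧
      (∀ k, (i, k) ∈ E → xb.2 k ∈ Set.Icc (0:ℝ) (bbar i))})
    (obji : I → (K → ℝ) → (K → ℝ) → (K → ℝ) → ℝ)
    (hobji : ∀ i lam x b, obji i lam x b =
      ∑ k ∈ Finset.univ.filter (fun k => (i, k) ∈ E), h i (r i k * (1 - lam k)) (b k) * s i * x k)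
    (Sistar : I → (K → ℝ) → Set ((K → ℝ) × (K → ℝ)))
    (hSistar : ∀ i lam, Sistar i lam =
      {xb | xb ∈ Si i ∧ ∀ yb ∈ Si i, obji i lam yb.1 yb.2 ≤ obji i lam xb.1 xb.2})
    (vi : I → (K → ℝ) → (K → ℝ) → K → ℝ)
    (hvi : ∀ i x b k, vi i x b k = if (i, k) ∈ E then r i k * s i * x k * ρ i (b k) else 0)
    (psi : I → (K → ℝ) → EReal)
    (hpsi : ∀ i lam, psi i lam = ⨆ xb ∈ Si i, ((obji i lam xb.1 xb.2 : ℝ) : EReal))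
    (lam : K → ℝ) (i : I)
    (hge1 : ∀ k, (i, k) ∈ E → 1 ≤ lam k) :
    psi i lam = 0 ∧
      Sistar i lam = {xb | xb ∈ Si i ∧ ∀ k, (i, k) ∈ E →
        (lam k = 1 → xb.1 k * xb.2 k = 0) ∧
        (1 < lam k → xb.1 k * ρ i (xb.2 k) = 0)} :=
  stmt_17_general E bbar hbbar ρ β hρ01 hβb s hs r hr h hdef hβρpos Si hSi obji hobji Sistar hSistar
    psi hpsi lam i hge1
end
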